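/- arXiv:math/9802039 — 11 statements merged into one kernel-verified Lean document; each statement's English description precedes it below -/
import Mathlib

section
/- Let R be a unital associative K-algebra over an infinite commutative domain K with torsion-free action. If the multiplicative semigroup (R,·) satisfies a semigroup identity u = v, where u = a u' b and v = a v' b with u' = v' the corresponding reduced identity (a is the longest common prefix and b the longest common suffix of u and v), then (R,·) also satisfies the reduced identity u' = v'. -/
/-- Evaluate a word (a list of variable indices, representing an element of the free
semigroup on `x₁, x₂, …`) under the binary operation `op` and the assignment `φ`.
The empty list is given the junk value `φ 0`; all statements only use nonempty words. -/
def evalWord {S : Type*} (op : S → S → S) (φ : ℕ → S) : List ℕ → S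
  | [] => φ 0
  | i :: t => t.foldl (fun a j => op a (φ j)) (φ i)

private lemma foldl_mul_eq {M : Type*} [Monoid M] :
    ∀ (l : List M) (x : M), List.foldl (· * ·) x l = x * l.prod
  | [], x => by simp
  | y :: t, x => by
    simp only [List.foldl_cons, List.prod_cons, foldl_mul_eq t (x * y), mul_assoc]

/-- On a nonempty word, `evalWord` is just the product of the images of the letters. -/
lemma evalWord_eq_prod {M : Type*} [Monoid M] (φ : ℕ → M) (w : List ℕ) (hw : w ≠ []) :
    evalWord (· * ·) φ w = (w.map φ).prod := by
  cases w with
  | nil => exact absurd rfl hw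
  | cons i t =>
    show t.foldl (fun a j => a * φ j) (φ i) = _
    rw [List.map_cons, List.prod_cons, ← List.foldl_map (f := φ) (g := (· * ·)) (l := t) (init := φ i),
      foldl_mul_eq]

/-- A "polynomial function" with coefficients in a torsion-free module over an
infinite domain that vanishes identically has all coefficients zero. -/
lemma coeffs_eq_zero_of_forall_sum_smul_eq_zero {K R : Type*} [CommRing K] [IsDomain K]
    [Infinite K] [AddCommGroup R] [Module K R]
    (htf : ∀ (k : K) (r : R), k ≠ 0 → k • r = 0 → r = 0)
    (n : ℕ) (r : Fin n → R) (h : ∀ t : K, ∑ j : Fin n, t ^ (j : ℕ) • r j = 0) :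
    ∀ j, r j = 0 := by
  classical
  intro k
  set t : Fin n → K := fun i => Infinite.natEmbedding K i with ht
  have htinj : Function.Injective t := fun i j hij => by
    have := (Infinite.natEmbedding K).injective hij
    exact Fin.val_injective (by exact_mod_cast this)
  set A : Matrix (Fin n) (Fin n) K := Matrix.vandermonde t with hA
  have hdet : A.det ≠ 0 := Matrix.det_vandermonde_ne_zero_iff.mpr htinj
  have hrow : ∀ i : Fin n, ∑ j : Fin n, A i j • r j = 0 := by
    intro i
    simpa [hA, Matrix.vandermonde] using h (t i)
  have key : A.det • r k = 0 := by
    have h1 : ∑ i : Fin n, (A.adjugate k i) • (∑ j : Fin n, A i j • r j) = 0 := by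
      simp [hrow]
    calc A.det • r k
        = ∑ j : Fin n, ((A.det • (1 : Matrix (Fin n) (Fin n) K)) k j) • r j := by
          simp [Matrix.smul_apply, Matrix.one_apply, smul_smul]
      _ = ∑ j : Fin n, ((A.adjugate * A) k j) • r j := by rw [Matrix.adjugate_mul]
      _ = ∑ j : Fin n, ∑ i : Fin n, (A.adjugate k i * A i j) • r j := by
          simp [Matrix.mul_apply, Finset.sum_smul]
      _ = ∑ i : Fin n, (A.adjugate k i) • (∑ j : Fin n, A i j • r j) := by
          rw [Finset.sum_comm]
          simp [Finset.smul_sum, mul_smul]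
      _ = 0 := h1
  exact htf A.det (r k) hdet key

open Polynomial in
private lemma monic_list_prod_XC {R : Type*} [Ring R] :
    ∀ (l : List R), ((l.map fun c => (C c + X : R[X])).prod).Monic
  | [] => by simp [Polynomial.monic_one]
  | c :: t => by
    simp only [List.map_cons, List.prod_cons]
    exact ((add_comm (C c) X ▸ monic_X_add_C c : (C c + X : R[X]).Monic)).mul
      (monic_list_prod_XC t)

/-- Proposition (unital case): if a unital algebra `R` over an infinite commutative domain
`K` with torsion-free action satisfies a (multiplicative) semigroup identity
`u = a u' b = v = a v' b`, where `u' = v'` is the corresponding reduced identity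
(`a` is the longest common prefix, `b` the longest common suffix — this is encoded by the
hypotheses that the first letters of `u'`, `v'` differ and the last letters of `u'`, `v'`
differ), then `(R,·)` also satisfies the reduced identity `u' = v'`. -/
theorem unital_semigroup_identity_reduces (K R : Type*) [CommRing K] [IsDomain K]
    [Infinite K] [Ring R] [Algebra K R]
    (htf : ∀ (k : K) (r : R), k ≠ 0 → k • r = 0 → r = 0)
    (a b u' v' : List ℕ) (hu' : u' ≠ []) (hv' : v' ≠ [])
    (hleft : u'.head? ≠ v'.head?) (hright : u'.getLast? ≠ v'.getLast?)
    (hid : ∀ φ : ℕ → R,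
      evalWord (· * ·) φ (a ++ u' ++ b) = evalWord (· * ·) φ (a ++ v' ++ b)) :
    ∀ φ : ℕ → R, evalWord (· * ·) φ u' = evalWord (· * ·) φ v' := by
  classical
  intro φ
  -- restate the hypothesis in terms of products
  have hid' : ∀ ψ : ℕ → R,
      (a.map ψ).prod * (u'.map ψ).prod * (b.map ψ).prod =
      (a.map ψ).prod * (v'.map ψ).prod * (b.map ψ).prod := by
    intro ψ
    have h1 := hid ψ
    have hne1 : a ++ u' ++ b ≠ [] := by simp [hu']
    have hne2 : a ++ v' ++ b ≠ [] := by simp [hv']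
    rw [evalWord_eq_prod ψ _ hne1, evalWord_eq_prod ψ _ hne2] at h1
    simpa [List.map_append, List.prod_append, mul_assoc] using h1
  -- polynomial substitution
  set Φ : ℕ → Polynomial R := fun i => Polynomial.C (φ i) + Polynomial.X with hΦ
  set A : Polynomial R := (a.map Φ).prod with hAdef
  set U : Polynomial R := (u'.map Φ).prod with hUdef
  set V : Polynomial R := (v'.map Φ).prod with hVdef
  set B : Polynomial R := (b.map Φ).prod with hBdef
  -- evaluation ring hom at the central point `algebraMap K R t`
  set E : K → (Polynomial R →+* R) := fun t =>
    Polynomial.eval₂RingHom' (RingHom.id R) (algebraMap K R t)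
      (fun r => Algebra.commute_algebraMap_right t r) with hE
  have hEΦ : ∀ (t : K) (i : ℕ), E t (Φ i) = φ i + algebraMap K R t := by
    intro t i
    simp [hE, hΦ, Polynomial.eval₂RingHom', Polynomial.eval₂_add]
  have hEprod : ∀ (t : K) (w : List ℕ),
      E t ((w.map Φ).prod) = (w.map fun i => φ i + algebraMap K R t).prod := by
    intro t w
    rw [map_list_prod, List.map_map]
    congr 1
    exact List.map_congr_left fun i _ => hEΦ t i
  -- the key polynomial vanishes under every evaluation
  set Q : Polynomial R := A * (U - V) * B with hQdef
  have hQeval : ∀ t : K, E t Q = 0 := by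
    intro t
    have := hid' (fun i => φ i + algebraMap K R t)
    have expand : E t Q = E t A * (E t U - E t V) * E t B := by
      simp [hQdef, map_mul, map_sub]
    rw [expand, hEprod, hEprod, hEprod, hEprod, mul_sub, sub_mul, sub_eq_zero]
    exact this
  -- hence the polynomial is zero, by the Vandermonde lemma
  have hQ0 : Q = 0 := by
    set n : ℕ := Q.natDegree + 1 with hn
    have hcoeff : ∀ j : Fin n, Q.coeff j = 0 := by
      apply coeffs_eq_zero_of_forall_sum_smul_eq_zero htf n (fun j => Q.coeff j)
      intro t
      have he : E t Q = ∑ i ∈ Finset.range n, Q.coeff i * (algebraMap K R t) ^ i := by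
        simpa [hE, Polynomial.eval₂RingHom'] using
          Polynomial.eval₂_eq_sum_range (RingHom.id R) (algebraMap K R t) (p := Q)
      have : ∑ i ∈ Finset.range n, Q.coeff i * (algebraMap K R t) ^ i = 0 := by
        rw [← he]; exact hQeval t
      calc ∑ j : Fin n, t ^ (j : ℕ) • Q.coeff j
          = ∑ i ∈ Finset.range n, t ^ i • Q.coeff i := Fin.sum_univ_eq_sum_range (fun i => t ^ i • Q.coeff i) n
        _ = ∑ i ∈ Finset.range n, Q.coeff i * (algebraMap K R t) ^ i := by
            refine Finset.sum_congr rfl fun i _ => ?_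
            rw [← map_pow, Algebra.smul_def,
              ← (Algebra.commute_algebraMap_left (t ^ i) (Q.coeff i)).eq]
        _ = 0 := this
    ext j
    rcases lt_or_ge j n with hj | hj
    · simpa using hcoeff ⟨j, hj⟩
    · simp [Polynomial.coeff_eq_zero_of_natDegree_lt (by omega : Q.natDegree < j)]
  -- cancel the monic factors A and B
  have hmap : ∀ w : List ℕ, w.map Φ = (w.map φ).map fun c => Polynomial.C c + Polynomial.X := by
    intro w; rw [List.map_map]; rfl
  have hAmonic : A.Monic := by rw [hAdef, hmap]; exact monic_list_prod_XC _
  have hBmonic : B.Monic := by rw [hBdef, hmap]; exact monic_list_prod_XC _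
  have h1 : (U - V) * B = 0 := by
    have := hQ0
    rw [hQdef, mul_assoc] at this
    exact hAmonic.mul_right_eq_zero_iff.mp this
  have hUV : U = V := sub_eq_zero.mp (hBmonic.mul_left_eq_zero_iff.mp h1)
  -- evaluate at 0 to conclude
  rw [evalWord_eq_prod φ u' hu', evalWord_eq_prod φ v' hv']
  calc (u'.map φ).prod = E 0 U := by rw [hEprod]; simp
    _ = E 0 V := by rw [hUV]
    _ = (v'.map φ).prod := by rw [hEprod]; simp
end

section
/- If a semigroup S satisfies a semigroup identity in the variables x, y, x₃, x₄, … which is left reduced (respectively right reduced, respectively reduced), then S satisfies a semigroup identity of the same type (left reduced, right reduced, or reduced, respectively) in the two variables x and y only. -/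
theorem evalWord_map {S : Type*} (op : S → S → S) (φ : ℕ → S) (f : ℕ → ℕ) (l : List ℕ)
    (hl : l ≠ []) : evalWord op φ (l.map f) = evalWord op (fun i => φ (f i)) l := by
  cases l with
  | nil => exact absurd rfl hl
  | cons i t => simp [evalWord, List.foldl_map]

theorem exists_coloring {a b c d : ℕ} (hab : a ≠ b) (hcd : c ≠ d) :
    ∃ f : ℕ → ℕ, (∀ i, f i < 2) ∧ f a ≠ f b ∧ f c ≠ f d := by
  by_cases h1 : c = a
  · refine ⟨fun i => if i = a then 0 else 1, fun i => by dsimp only; split <;> omega, ?_, ?_⟩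
    · simp [Ne.symm hab]
    · have hd : d ≠ a := h1 ▸ Ne.symm hcd
      simp [h1, hd]
  by_cases h2 : d = a
  · refine ⟨fun i => if i = a then 0 else 1, fun i => by dsimp only; split <;> omega, ?_, ?_⟩
    · simp [Ne.symm hab]
    · have hc : c ≠ a := h2 ▸ hcd
      simp [h2, hc]
  by_cases h3 : c = b
  · refine ⟨fun i => if i = b then 1 else 0, fun i => by dsimp only; split <;> omega, ?_, ?_⟩
    · simp [hab]
    · have hd : d ≠ b := h3 ▸ Ne.symm hcd
      simp [h3, hd]
  by_cases h4 : d = b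
  · refine ⟨fun i => if i = b then 1 else 0, fun i => by dsimp only; split <;> omega, ?_, ?_⟩
    · simp [hab]
    · have hc : c ≠ b := h4 ▸ hcd
      simp [h4, hc]
  · refine ⟨fun i => if i = a ∨ i = c then 0 else 1,
      fun i => by dsimp only; split <;> omega, ?_, ?_⟩
    · simp [Ne.symm hab, Ne.symm h3]
    · simp [h1, h2, Ne.symm hcd]

theorem map_ne_nil {l : List ℕ} (h : l ≠ []) (f : ℕ → ℕ) : l.map f ≠ [] := by
  simpa using h

theorem mem_map_lt {l : List ℕ} {f : ℕ → ℕ} (hf : ∀ i, f i < 2) : ∀ i ∈ l.map f, i < 2 := by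
  simp only [List.mem_map]
  rintro i ⟨j, -, rfl⟩
  exact hf j

theorem head_map_ne {u v : List ℕ} (hu : u ≠ []) (hv : v ≠ []) {f : ℕ → ℕ}
    (h : f (u.head hu) ≠ f (v.head hv)) : (u.map f).head? ≠ (v.map f).head? := by
  rw [List.head?_map, List.head?_map, List.head?_eq_head hu, List.head?_eq_head hv]
  simpa using h

theorem last_map_ne {u v : List ℕ} (hu : u ≠ []) (hv : v ≠ []) {f : ℕ → ℕ}
    (h : f (u.getLast hu) ≠ f (v.getLast hv)) : (u.map f).getLast? ≠ (v.map f).getLast? := by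
  rw [List.getLast?_map, List.getLast?_map, List.getLast?_eq_getLast hu,
    List.getLast?_eq_getLast hv]
  simpa using h

/-- Proposition 2.1(i): if a semigroup `S` satisfies a left reduced (resp. right reduced,
resp. reduced) identity in the variables `x = x₁ = 0`, `y = x₂ = 1`, `x₃ = 2`, …, then `S`
satisfies an identity of the same type in the two variables `x` and `y` only. -/
theorem two_variable_reduced_identity (S : Type*) [Semigroup S] (u v : List ℕ)
    (hu : u ≠ []) (hv : v ≠ []) (huv : u ≠ v)
    (hid : ∀ φ : ℕ → S, evalWord (· * ·) φ u = evalWord (· * ·) φ v) :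
    (u.head? ≠ v.head? →
      ∃ u' v' : List ℕ, u' ≠ [] ∧ v' ≠ [] ∧ u' ≠ v' ∧
        (∀ i ∈ u', i < 2) ∧ (∀ i ∈ v', i < 2) ∧ u'.head? ≠ v'.head? ∧
        ∀ φ : ℕ → S, evalWord (· * ·) φ u' = evalWord (· * ·) φ v') ∧
    (u.getLast? ≠ v.getLast? →
      ∃ u' v' : List ℕ, u' ≠ [] ∧ v' ≠ [] ∧ u' ≠ v' ∧
        (∀ i ∈ u', i < 2) ∧ (∀ i ∈ v', i < 2) ∧ u'.getLast? ≠ v'.getLast? ∧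
        ∀ φ : ℕ → S, evalWord (· * ·) φ u' = evalWord (· * ·) φ v') ∧
    (u.head? ≠ v.head? → u.getLast? ≠ v.getLast? →
      ∃ u' v' : List ℕ, u' ≠ [] ∧ v' ≠ [] ∧ u' ≠ v' ∧
        (∀ i ∈ u', i < 2) ∧ (∀ i ∈ v', i < 2) ∧
        u'.head? ≠ v'.head? ∧ u'.getLast? ≠ v'.getLast? ∧
        ∀ φ : ℕ → S, evalWord (· * ·) φ u' = evalWord (· * ·) φ v') := by
  have hident : ∀ f : ℕ → ℕ, ∀ φ : ℕ → S,
      evalWord (· * ·) φ (u.map f) = evalWord (· * ·) φ (v.map f) := by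
    intro f φ
    rw [evalWord_map _ _ _ _ hu, evalWord_map _ _ _ _ hv]
    exact hid _
  refine ⟨?_, ?_, ?_⟩
  · intro hh
    have hab : u.head hu ≠ v.head hv := by
      rw [List.head?_eq_head hu, List.head?_eq_head hv] at hh
      simpa using hh
    set f : ℕ → ℕ := fun i => if i = u.head hu then 0 else 1 with hf
    have hfab : f (u.head hu) ≠ f (v.head hv) := by simp [hf, Ne.symm hab]
    have hhd := head_map_ne hu hv hfab
    exact ⟨u.map f, v.map f, map_ne_nil hu f, map_ne_nil hv f,
      fun h => hhd (congrArg List.head? h),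
      mem_map_lt (fun i => by simp only [hf]; split <;> omega),
      mem_map_lt (fun i => by simp only [hf]; split <;> omega),
      hhd, hident f⟩
  · intro hh
    have hab : u.getLast hu ≠ v.getLast hv := by
      rw [List.getLast?_eq_getLast hu, List.getLast?_eq_getLast hv] at hh
      simpa using hh
    set f : ℕ → ℕ := fun i => if i = u.getLast hu then 0 else 1 with hf
    have hfab : f (u.getLast hu) ≠ f (v.getLast hv) := by simp [hf, Ne.symm hab]
    have hhd := last_map_ne hu hv hfab
    exact ⟨u.map f, v.map f, map_ne_nil hu f, map_ne_nil hv f,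
      fun h => hhd (congrArg List.getLast? h),
      mem_map_lt (fun i => by simp only [hf]; split <;> omega),
      mem_map_lt (fun i => by simp only [hf]; split <;> omega),
      hhd, hident f⟩
  · intro hh hl
    have hab : u.head hu ≠ v.head hv := by
      rw [List.head?_eq_head hu, List.head?_eq_head hv] at hh
      simpa using hh
    have hcd : u.getLast hu ≠ v.getLast hv := by
      rw [List.getLast?_eq_getLast hu, List.getLast?_eq_getLast hv] at hl
      simpa using hl
    obtain ⟨f, hf2, hfab, hfcd⟩ := exists_coloring hab hcd
    have hhd := head_map_ne hu hv hfab
    have hld := last_map_ne hu hv hfcd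
    exact ⟨u.map f, v.map f, map_ne_nil hu f, map_ne_nil hv f,
      fun h => hhd (congrArg List.head? h),
      mem_map_lt hf2, mem_map_lt hf2, hhd, hld, hident f⟩
end

section
/- Let K be an infinite commutative domain and R an associative K-algebra with torsion-free K-action. If R satisfies a binomial identity α₁u₁ + α₂u₂ = 0, then either R is bounded nil (there exists n with yⁿ = 0 identically on R) or the multiplicative semigroup (R,·) satisfies a semigroup identity. -/
/-- `opow op x t` is the `t`-th power `x^t` of `x` with respect to the binary operation
`op`, for `t ≥ 1` (with the junk value `x = x^1` at `t = 0`). -/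
def opow {S : Type*} (op : S → S → S) (x : S) (t : ℕ) : S := (fun a => op a x)^[t - 1] x

section Aux

variable {K R : Type*} [CommRing K] [IsDomain K] [Infinite K] [NonUnitalRing R]
  [Module K R] [IsScalarTower K R R] [SMulCommClass K R R]

private lemma foldl_mul_eq_iterate (r : R) : ∀ (l : List ℕ) (x : R),
    l.foldl (fun a (_ : ℕ) => a * r) x = (fun a => a * r)^[l.length] x
  | [], _ => rfl
  | j :: l, x => by
    simp only [List.foldl_cons, List.length_cons, Function.iterate_succ_apply]
    exact foldl_mul_eq_iterate r l (x * r)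

private lemma evalWord_const (r : R) (u : List ℕ) (hu : u ≠ []) :
    evalWord (· * ·) (fun _ => r) u = opow (· * ·) r u.length := by
  cases u with
  | nil => exact absurd rfl hu
  | cons i t =>
    show t.foldl (fun a _ => a * r) r = _
    rw [foldl_mul_eq_iterate]
    simp [opow]

private lemma foldl_smul (k : K) (r : R) : ∀ (l : List ℕ) (x : R),
    l.foldl (fun a (_ : ℕ) => a * r) (k • x) = k • l.foldl (fun a (_ : ℕ) => a * r) x
  | [], _ => rfl
  | j :: l, x => by
    simp only [List.foldl_cons, smul_mul_assoc]
    exact foldl_smul k r l (x * r)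

private lemma foldl_mul_smul (k : K) (r : R) : ∀ (l : List ℕ) (x : R),
    l.foldl (fun a (_ : ℕ) => a * (k • r)) x
      = k ^ l.length • l.foldl (fun a (_ : ℕ) => a * r) x
  | [], x => by simp
  | j :: l, x => by
    simp only [List.foldl_cons, List.length_cons]
    rw [foldl_mul_smul k r l (x * (k • r)), mul_smul_comm, foldl_smul, smul_smul,
      ← pow_succ]

private lemma evalWord_const_smul (k : K) (r : R) (u : List ℕ) (hu : u ≠ []) :
    evalWord (· * ·) (fun _ => k • r) u
      = k ^ u.length • evalWord (· * ·) (fun _ => r) u := by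
  cases u with
  | nil => exact absurd rfl hu
  | cons i t =>
    show t.foldl (fun a _ => a * (k • r)) (k • r) = k ^ (t.length + 1) • _
    rw [foldl_mul_smul, foldl_smul, smul_smul, ← pow_succ]
    rfl

private lemma exists_pow_ne {n m : ℕ} (h : n ≠ m) : ∃ k : K, k ^ n ≠ k ^ m := by
  by_contra hc
  push_neg at hc
  have hp : (Polynomial.X ^ n - Polynomial.X ^ m : Polynomial K) = 0 := by
    apply Polynomial.zero_of_eval_zero
    intro x
    simp [hc x]
  have h2 := congrArg (fun p => Polynomial.coeff p n) hp
  simp [Polynomial.coeff_X_pow, h, Ne.symm h] at h2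

end Aux

/-- Proposition 2.1(ii): if an algebra `R` over an infinite commutative domain `K` with
torsion-free action satisfies a (nontrivial) binomial identity `α₁u₁ + α₂u₂ = 0`, then
either `R` is bounded nil or `(R,·)` satisfies a semigroup identity. -/
theorem binomial_implies_nil_or_semigroup_identity (K R : Type*) [CommRing K] [IsDomain K]
    [Infinite K] [NonUnitalRing R] [Module K R] [IsScalarTower K R R] [SMulCommClass K R R]
    (htf : ∀ (k : K) (r : R), k ≠ 0 → k • r = 0 → r = 0)
    (α₁ α₂ : K) (u₁ u₂ : List ℕ) (h₁ : u₁ ≠ []) (h₂ : u₂ ≠ [])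
    (hnt : u₁ = u₂ → α₁ + α₂ ≠ 0) (hnt' : u₁ ≠ u₂ → (α₁ ≠ 0 ∨ α₂ ≠ 0))
    (hid : ∀ φ : ℕ → R, α₁ • evalWord (· * ·) φ u₁ + α₂ • evalWord (· * ·) φ u₂ = 0) :
    (∃ n : ℕ, 1 ≤ n ∧ ∀ r : R, opow (· * ·) r n = 0) ∨
    (∃ u v : List ℕ, u ≠ [] ∧ v ≠ [] ∧ u ≠ v ∧
      ∀ φ : ℕ → R, evalWord (· * ·) φ u = evalWord (· * ·) φ v) := by
  have hlen₁ : 1 ≤ u₁.length := List.length_pos_iff.mpr h₁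
  have hlen₂ : 1 ≤ u₂.length := List.length_pos_iff.mpr h₂
  by_cases hlen : u₁.length = u₂.length
  · by_cases hsum : α₁ + α₂ = 0
    · -- semigroup identity case
      right
      have hne : u₁ ≠ u₂ := fun h => (hnt h) hsum
      have hα₂ : α₂ = -α₁ := eq_neg_of_add_eq_zero_right hsum
      have hα : α₁ ≠ 0 := by
        rcases hnt' hne with h | h
        · exact h
        · intro h0
          exact h (by rw [hα₂, h0, neg_zero])
      refine ⟨u₁, u₂, h₁, h₂, hne, fun φ => ?_⟩
      have h3 := hid φ
      rw [hα₂, neg_smul, add_neg_eq_zero ] at h3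
      have h4 : α₁ • (evalWord (· * ·) φ u₁ - evalWord (· * ·) φ u₂) = 0 := by
        rw [smul_sub, h3, sub_self]
      exact sub_eq_zero.mp (htf α₁ _ hα h4)
    · -- bounded nil, equal lengths
      left
      refine ⟨u₁.length, hlen₁, fun r => ?_⟩
      have h3 := hid (fun _ => r)
      rw [evalWord_const r u₁ h₁, evalWord_const r u₂ h₂, ← hlen, ← add_smul] at h3
      exact htf _ _ hsum h3
  · -- lengths differ
    left
    have hne : u₁ ≠ u₂ := fun h => hlen (by rw [h])
    by_cases hα₂ : α₂ = 0
    · have hα₁ : α₁ ≠ 0 := by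
        rcases hnt' hne with h | h
        · exact h
        · exact absurd hα₂ h
      refine ⟨u₁.length, hlen₁, fun r => ?_⟩
      have h3 := hid (fun _ => r)
      rw [hα₂, zero_smul, add_zero, evalWord_const r u₁ h₁] at h3
      exact htf _ _ hα₁ h3
    · obtain ⟨k, hk⟩ : ∃ k : K, k ^ u₂.length ≠ k ^ u₁.length :=
        exists_pow_ne (fun h => hlen h.symm)
      refine ⟨u₂.length, hlen₂, fun r => ?_⟩
      have ha := hid (fun _ => r)
      have hb := hid (fun _ => k • r)
      rw [evalWord_const r u₁ h₁, evalWord_const r u₂ h₂] at ha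
      rw [evalWord_const_smul k r u₁ h₁, evalWord_const_smul k r u₂ h₂,
        evalWord_const r u₁ h₁, evalWord_const r u₂ h₂] at hb
      set A := opow (· * ·) r u₁.length with hA
      set B := opow (· * ·) r u₂.length with hB
      have key : ((k ^ u₂.length - k ^ u₁.length) * α₂) • B = 0 := by
        have e : ((k ^ u₂.length - k ^ u₁.length) * α₂) • B
            = (α₁ • (k ^ u₁.length • A) + α₂ • (k ^ u₂.length • B))
              - k ^ u₁.length • (α₁ • A + α₂ • B) := by
          rw [smul_add, smul_smul, smul_smul, smul_smul, smul_smul, sub_mul]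
          rw [sub_smul]
          ring_nf
          abel
        rw [e, ha, hb, smul_zero, sub_zero]
      exact htf _ _ (mul_ne_zero (sub_ne_zero.mpr hk) hα₂) key
end

section
/- Let K be an infinite commutative domain and R an associative K-algebra with torsion-free K-action. If R satisfies a binomial identity which is left reduced (respectively right reduced, respectively reduced), then R satisfies a partial linear identity Σ_{i=0}^n α_i yⁱ x y^{n−i} = 0 of the same type, i.e. with α₀ ≠ 0 (respectively α_n ≠ 0, respectively both α₀ ≠ 0 and α_n ≠ 0). -/
/-- `sandwich y i x j = yⁱ * x * yʲ` in a (not necessarily unital) ring. -/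
def sandwich {R : Type*} [Mul R] (y : R) (i : ℕ) (x : R) (j : ℕ) : R :=
  (fun a => y * a)^[i] ((fun a => a * y)^[j] x)

set_option linter.unusedSectionVars false
set_option maxHeartbeats 1000000

section Aux
variable {K R : Type*} [CommRing K] [IsDomain K] [Infinite K]
  [NonUnitalRing R] [Module K R] [IsScalarTower K R R] [SMulCommClass K R R]

lemma sandwich_zero_zero (y x : R) : sandwich y 0 x 0 = x := rfl

lemma mulLeft_iterate_mul (y z : R) (i : ℕ) :
    (fun a => y * a)^[i] z * y = (fun a => y * a)^[i] (z * y) := by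
  induction i generalizing z with
  | zero => simp
  | succ n ih =>
      rw [Function.iterate_succ_apply, ih, Function.iterate_succ_apply, mul_assoc]

lemma sandwich_mul (y x : R) (i q : ℕ) : sandwich y i x q * y = sandwich y i x (q + 1) := by
  unfold sandwich
  rw [mulLeft_iterate_mul, Function.iterate_succ_apply']

lemma evalWord_singleton (φ : ℕ → R) (j : ℕ) : evalWord (· * ·) φ [j] = φ j := rfl

lemma evalWord_concat (φ : ℕ → R) (u : List ℕ) (hu : u ≠ []) (j : ℕ) :
    evalWord (· * ·) φ (u ++ [j]) = evalWord (· * ·) φ u * φ j := by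
  obtain ⟨i, t, rfl⟩ := List.exists_cons_of_ne_nil hu
  simp [evalWord, List.foldl_append]

lemma nonempty_concat_induction {motive : List ℕ → Prop}
    (h1 : ∀ j, motive [j]) (h2 : ∀ u j, u ≠ [] → motive u → motive (u ++ [j])) :
    ∀ u : List ℕ, u ≠ [] → motive u := by
  intro u
  induction u using List.reverseRecOn with
  | nil => simp
  | append_singleton v j ih =>
      intro _
      rcases eq_or_ne v [] with rfl | hv
      · simpa using h1 j
      · exact h2 v j hv (ih hv)

lemma evalConst_mul (y : R) :
    ∀ u : List ℕ, u ≠ [] → ∀ x : R,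
      evalWord (· * ·) (fun _ => y) u * x = (fun a => y * a)^[u.length] x := by
  apply nonempty_concat_induction
  · intro j x
    simp [evalWord_singleton]
  · intro v j hv ih x
    rw [evalWord_concat _ v hv, mul_assoc, ih (y * x)]
    simp [Function.iterate_succ_apply]

lemma evalConst_smul (t : K) (y : R) :
    ∀ u : List ℕ, u ≠ [] →
      evalWord (· * ·) (fun _ => t • y) u = t ^ u.length • evalWord (· * ·) (fun _ => y) u := by
  apply nonempty_concat_induction
  · intro j
    simp [evalWord_singleton]
  · intro v j hv ih
    rw [evalWord_concat _ v hv, evalWord_concat _ v hv, ih, smul_mul_assoc, mul_smul_comm,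
      smul_smul, List.length_append]
    simp [pow_succ]

lemma sum_ite_range (M k : ℕ) (hk : k ≤ M) (f : ℕ → R) :
    ∑ i ∈ Finset.range M, (if i < k then f i else 0) = ∑ i ∈ Finset.range k, f i := by
  rw [← Finset.sum_filter]
  congr 1
  ext i
  simp only [Finset.mem_filter, Finset.mem_range]
  omega

lemma vand (htf : ∀ (k : K) (r : R), k ≠ 0 → k • r = 0 → r = 0) :
    ∀ (N : ℕ) (S : Finset K) (r : ℕ → R),
      (∀ t : K, t ∉ S → ∑ k ∈ Finset.range N, t ^ k • r k = 0) → ∀ k < N, r k = 0 := by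
  intro N
  induction N with
  | zero => intro S r _ k hk; omega
  | succ N ih =>
      intro S r H
      classical
      have hrN : r N = 0 := by
        rcases Nat.eq_zero_or_pos N with rfl | hN
        · obtain ⟨t, ht⟩ := Infinite.exists_notMem_finset S
          simpa using H t ht
        · obtain ⟨s, hs⟩ := Infinite.exists_notMem_finset S
          set r' : ℕ → R := fun i =>
            ∑ k ∈ Finset.range (N + 1), if i < k then s ^ (k - 1 - i) • r k else 0 with hr'
          have key : ∀ t : K, t ∉ insert s S →
              ∑ i ∈ Finset.range N, t ^ i • r' i = 0 := by
            intro t ht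
            have hts : t ≠ s := fun h => ht (by simp [h])
            have htS : t ∉ S := fun h => ht (Finset.mem_insert_of_mem h)
            have E0 : ∑ k ∈ Finset.range (N + 1), (t ^ k - s ^ k) • r k = 0 := by
              simp only [sub_smul]
              rw [Finset.sum_sub_distrib, H t htS, H s hs, sub_zero]
            have E1 : (t - s) • ∑ k ∈ Finset.range (N + 1),
                (∑ i ∈ Finset.range k, t ^ i * s ^ (k - 1 - i)) • r k = 0 := by
              rw [Finset.smul_sum, ← E0]
              apply Finset.sum_congr rfl
              intro k _
              rw [smul_smul, mul_comm, geom_sum₂_mul]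
            have E2 : ∑ k ∈ Finset.range (N + 1),
                (∑ i ∈ Finset.range k, t ^ i * s ^ (k - 1 - i)) • r k = 0 :=
              htf _ _ (sub_ne_zero.mpr hts) E1
            have E3 : ∑ i ∈ Finset.range (N + 1), t ^ i • r' i = 0 := by
              rw [← E2, hr']
              simp only [Finset.smul_sum, smul_ite, smul_zero, smul_smul]
              rw [Finset.sum_comm]
              apply Finset.sum_congr rfl
              intro k hk
              rw [Finset.sum_smul]
              rw [sum_ite_range (N + 1) k (by simp only [Finset.mem_range] at hk; omega)]
            have hr'N : r' N = 0 := by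
              rw [hr']
              apply Finset.sum_eq_zero
              intro k hk
              simp only [Finset.mem_range] at hk
              rw [if_neg (by omega)]
            rw [Finset.sum_range_succ, hr'N, smul_zero, add_zero] at E3
            exact E3
          have h' := ih (insert s S) r' key (N - 1) (by omega)
          have heq : r' (N - 1) = r N := by
            show (∑ k ∈ Finset.range (N + 1),
              if N - 1 < k then s ^ (k - 1 - (N - 1)) • r k else 0) = r N
            have hside : ∀ b ∈ Finset.range (N + 1), b ≠ N →
                (if N - 1 < b then s ^ (b - 1 - (N - 1)) • r b else 0) = 0 := by
              intro k hk hkN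
              simp only [Finset.mem_range] at hk
              rw [if_neg (by omega)]
            rw [Finset.sum_eq_single_of_mem N (Finset.self_mem_range_succ N) hside,
              if_pos (by omega), show N - 1 - (N - 1) = 0 by omega, pow_zero, one_smul]
          rw [heq] at h'
          exact h'
      intro k hk
      rcases Nat.lt_succ_iff_lt_or_eq.mp hk with hk' | rfl
      · apply ih S r _ k hk'
        intro t ht
        have := H t ht
        rw [Finset.sum_range_succ, hrN, smul_zero, add_zero] at this
        exact this
      · exact hrN

lemma expand (p : ℕ → Prop) [DecidablePred p] (x y : R) :
    ∀ u : List ℕ, u ≠ [] →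
    ∃ c : ℕ → R,
      c 0 = evalWord (· * ·) (fun _ => y) u ∧
      c 1 = (∑ i ∈ Finset.range u.length,
          if p (u.getD i 0) then sandwich y i x (u.length - 1 - i) else 0) ∧
      ∀ t : K, evalWord (· * ·) (fun i => if p i then t • x + y else y) u
        = ∑ k ∈ Finset.range (u.length + 1), t ^ k • c k := by
  apply nonempty_concat_induction
  · intro j
    refine ⟨fun k => if k = 0 then y else if k = 1 then (if p j then x else 0) else 0,
      by simp [evalWord_singleton], ?_, ?_⟩
    · by_cases hp : p j <;>
        simp [hp, sandwich_zero_zero]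
    · intro t
      by_cases hp : p j <;>
        simp [hp, evalWord_singleton, Finset.sum_range_succ, add_comm]
  · intro v j hv ih
    obtain ⟨c, hc0, hc1, hce⟩ := ih
    set L := v.length with hL
    have hL1 : 1 ≤ L := by
      rw [hL]
      exact List.length_pos_iff.mpr hv
    set e : R := if p j then x else 0 with he
    refine ⟨fun k => (if k ≤ L then c k * y else 0) + (if k = 0 then 0 else c (k - 1) * e),
      ?_, ?_, ?_⟩
    · rw [evalWord_concat _ v hv]
      simp [hc0]
    · -- c' 1
      show (if 1 ≤ L then c 1 * y else 0) + (if 1 = 0 then (0 : R) else c (1 - 1) * e) = _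
      rw [if_pos hL1, if_neg one_ne_zero]
      simp only [List.length_append, List.length_singleton]
      rw [Finset.sum_range_succ]
      have hlast : (v ++ [j]).getD L 0 = j := by
        rw [List.getD_eq_getElem?_getD]
        rw [List.getElem?_append_right (le_refl L)]
        simp [hL]
      rw [hlast, show L + 1 - 1 - L = 0 by omega]
      have hrest : ∀ i ∈ Finset.range L,
          (if p ((v ++ [j]).getD i 0) then sandwich y i x (L + 1 - 1 - i) else 0)
            = (if p (v.getD i 0) then sandwich y i x (L - 1 - i) else 0) * y := by
        intro i hi
        simp only [Finset.mem_range] at hi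
        rw [List.getD_eq_getElem?_getD, List.getElem?_append_left (by omega),
          ← List.getD_eq_getElem?_getD]
        by_cases hp : p (v.getD i 0)
        · rw [if_pos hp, if_pos hp, sandwich_mul, show L - 1 - i + 1 = L + 1 - 1 - i by omega]
        · rw [if_neg hp, if_neg hp, zero_mul]
      rw [Finset.sum_congr rfl hrest, ← Finset.sum_mul, ← hc1]
      congr 1
      rw [hc0, he]
      by_cases hp : p j
      · rw [if_pos hp, if_pos hp, evalConst_mul y v hv x]
        rfl
      · rw [if_neg hp, if_neg hp, mul_zero]
    · intro t
      rw [evalWord_concat _ v hv, hce t]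
      have hφj : (if p j then t • x + y else y) = t • e + y := by
        by_cases hp : p j <;> simp [he, hp]
      rw [hφj, Finset.sum_mul]
      have hterm : ∀ k ∈ Finset.range (L + 1),
          (t ^ k • c k) * (t • e + y) = t ^ k • (c k * y) + t ^ (k + 1) • (c k * e) := by
        intro k _
        rw [mul_add, smul_mul_assoc, smul_mul_assoc, mul_smul_comm, smul_smul, ← pow_succ,
          add_comm]
      rw [Finset.sum_congr rfl hterm, Finset.sum_add_distrib]
      have hlen : (v ++ [j]).length = L + 1 := by simp [hL]
      rw [hlen]
      simp only [smul_add]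
      rw [Finset.sum_add_distrib]
      congr 1
      · rw [Finset.sum_range_succ (fun k => t ^ k • if k ≤ L then c k * y else 0),
          if_neg (by omega), smul_zero, add_zero]
        apply Finset.sum_congr rfl
        intro k hk
        simp only [Finset.mem_range] at hk
        rw [if_pos (by omega)]
      · rw [Finset.sum_range_succ' (fun k => t ^ k • if k = 0 then 0 else c (k - 1) * e)]
        simp

lemma allones (htf : ∀ (k : K) (r : R), k ≠ 0 → k • r = 0 → r = 0)
    (u : List ℕ) (hu : u ≠ []) (h : ∀ z : R, evalWord (· * ·) (fun _ => z) u = 0) :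
    ∀ x y : R, ∑ i ∈ Finset.range u.length, sandwich y i x (u.length - 1 - i) = 0 := by
  intro x y
  obtain ⟨c, hc0, hc1, hce⟩ := expand (K := K) (fun _ => True) x y u hu
  have hz : ∀ t : K, t ∉ (∅ : Finset K) →
      ∑ k ∈ Finset.range (u.length + 1), t ^ k • c k = 0 := by
    intro t _
    rw [← hce t]
    simpa using h (t • x + y)
  have hlen : 0 < u.length := List.length_pos_iff.mpr hu
  have h1 := vand htf (u.length + 1) ∅ c hz 1 (by omega)
  rw [hc1] at h1
  simpa using h1

end Aux

/-- Proposition 2.1(iii): if an algebra `R` over an infinite commutative domain `K` with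
torsion-free action satisfies a left reduced (resp. right reduced, resp. reduced)
binomial identity, then `R` satisfies a partial linear identity
`∑_{i=0}^n αᵢ yⁱ x y^{n-i} = 0` of the same type, i.e. with `α₀ ≠ 0`
(resp. `αₙ ≠ 0`, resp. both). -/
theorem binomial_implies_partial_linear (K R : Type*) [CommRing K] [IsDomain K]
    [Infinite K] [NonUnitalRing R] [Module K R] [IsScalarTower K R R] [SMulCommClass K R R]
    (htf : ∀ (k : K) (r : R), k ≠ 0 → k • r = 0 → r = 0)
    (α₁ α₂ : K) (u₁ u₂ : List ℕ) (h₁ : u₁ ≠ []) (h₂ : u₂ ≠ [])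
    (hnt : u₁ = u₂ → α₁ + α₂ ≠ 0) (hnt' : u₁ ≠ u₂ → (α₁ ≠ 0 ∨ α₂ ≠ 0))
    (hid : ∀ φ : ℕ → R, α₁ • evalWord (· * ·) φ u₁ + α₂ • evalWord (· * ·) φ u₂ = 0) :
    (u₁.head? ≠ u₂.head? →
      ∃ (n : ℕ) (α : Fin (n + 1) → K), α 0 ≠ 0 ∧
        ∀ x y : R, ∑ i : Fin (n + 1), α i • sandwich y (i : ℕ) x (n - (i : ℕ)) = 0) ∧
    (u₁.getLast? ≠ u₂.getLast? →
      ∃ (n : ℕ) (α : Fin (n + 1) → K), α (Fin.last n) ≠ 0 ∧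
        ∀ x y : R, ∑ i : Fin (n + 1), α i • sandwich y (i : ℕ) x (n - (i : ℕ)) = 0) ∧
    (u₁.head? ≠ u₂.head? → u₁.getLast? ≠ u₂.getLast? →
      ∃ (n : ℕ) (α : Fin (n + 1) → K), α 0 ≠ 0 ∧ α (Fin.last n) ≠ 0 ∧
        ∀ x y : R, ∑ i : Fin (n + 1), α i • sandwich y (i : ℕ) x (n - (i : ℕ)) = 0) := by
  classical
  -- From a bounded-nilpotence-type identity, build an "all ones" partial linear identity.
  have build : ∀ u : List ℕ, u ≠ [] → (∀ z : R, evalWord (· * ·) (fun _ => z) u = 0) →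
      ∃ (n : ℕ) (α : Fin (n + 1) → K), α 0 ≠ 0 ∧ α (Fin.last n) ≠ 0 ∧
        ∀ x y : R, ∑ i : Fin (n + 1), α i • sandwich y (i : ℕ) x (n - (i : ℕ)) = 0 := by
    intro u hu hz
    obtain ⟨n, hn⟩ : ∃ n, u.length = n + 1 :=
      ⟨u.length - 1, by have := List.length_pos_iff.mpr hu; omega⟩
    refine ⟨n, fun _ => 1, one_ne_zero, one_ne_zero, ?_⟩
    intro x y
    have hall := allones htf u hu hz x y
    rw [hn] at hall
    refine (Fin.sum_univ_eq_sum_range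
      (fun i => (1 : K) • sandwich y i x (n - i)) (n + 1)).trans ?_
    simpa using hall
  by_cases hα₁ : α₁ = 0
  · have hα₂ : α₂ ≠ 0 := by
      rcases eq_or_ne u₁ u₂ with h | h
      · intro h2
        exact hnt h (by rw [hα₁, h2, add_zero])
      · rcases hnt' h with h' | h'
        · exact absurd hα₁ h'
        · exact h'
    have hz : ∀ z : R, evalWord (· * ·) (fun _ => z) u₂ = 0 := by
      intro z
      have h0 := hid (fun _ => z)
      rw [hα₁, zero_smul, zero_add] at h0
      exact htf _ _ hα₂ h0
    obtain ⟨n, α, h0, hl, hident⟩ := build u₂ h₂ hz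
    exact ⟨fun _ => ⟨n, α, h0, hident⟩, fun _ => ⟨n, α, hl, hident⟩,
      fun _ _ => ⟨n, α, h0, hl, hident⟩⟩
  by_cases hα₂ : α₂ = 0
  · have hz : ∀ z : R, evalWord (· * ·) (fun _ => z) u₁ = 0 := by
      intro z
      have h0 := hid (fun _ => z)
      rw [hα₂, zero_smul, add_zero] at h0
      exact htf _ _ hα₁ h0
    obtain ⟨n, α, h0, hl, hident⟩ := build u₁ h₁ hz
    exact ⟨fun _ => ⟨n, α, h0, hident⟩, fun _ => ⟨n, α, hl, hident⟩,
      fun _ _ => ⟨n, α, h0, hl, hident⟩⟩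
  by_cases hlen : u₁.length = u₂.length
  case neg =>
    -- words of different lengths: R is nil of bounded index
    have hz : ∀ z : R, evalWord (· * ·) (fun _ => z) u₁ = 0 := by
      intro z
      have h0 : ∀ t : K,
          α₁ • (t ^ u₁.length • evalWord (· * ·) (fun _ => z) u₁) +
          α₂ • (t ^ u₂.length • evalWord (· * ·) (fun _ => z) u₂) = 0 := by
        intro t
        have := hid (fun _ => t • z)
        rwa [evalConst_smul t z u₁ h₁, evalConst_smul t z u₂ h₂] at this
      have key : ∀ t : K, t ∉ (∅ : Finset K) →
          ∑ k ∈ Finset.range (max u₁.length u₂.length + 1), t ^ k •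
            ((if k = u₁.length then α₁ • evalWord (· * ·) (fun _ => z) u₁ else 0) +
             (if k = u₂.length then α₂ • evalWord (· * ·) (fun _ => z) u₂ else 0)) = 0 := by
        intro t _
        simp only [smul_add, smul_ite, smul_zero]
        rw [Finset.sum_add_distrib,
          Finset.sum_ite_eq' (Finset.range (max u₁.length u₂.length + 1)) u₁.length
            (fun k => t ^ k • (α₁ • evalWord (· * ·) (fun _ => z) u₁)),
          Finset.sum_ite_eq' (Finset.range (max u₁.length u₂.length + 1)) u₂.length
            (fun k => t ^ k • (α₂ • evalWord (· * ·) (fun _ => z) u₂)),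
          if_pos (Finset.mem_range.mpr (by omega)), if_pos (Finset.mem_range.mpr (by omega))]
        rw [smul_smul, smul_smul, mul_comm (t ^ u₁.length) α₁, mul_comm (t ^ u₂.length) α₂,
          mul_smul, mul_smul]
        exact h0 t
      have hv := vand htf (max u₁.length u₂.length + 1) ∅ _ key u₁.length
        (by omega)
      rw [if_pos rfl, if_neg hlen, add_zero] at hv
      exact htf _ _ hα₁ hv
    obtain ⟨n, α, h0, hl, hident⟩ := build u₁ h₁ hz
    exact ⟨fun _ => ⟨n, α, h0, hident⟩, fun _ => ⟨n, α, hl, hident⟩,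
      fun _ _ => ⟨n, α, h0, hl, hident⟩⟩
  case pos =>
    -- main case: both coefficients nonzero, equal lengths
    obtain ⟨n, hlen1⟩ : ∃ n, u₁.length = n + 1 :=
      ⟨u₁.length - 1, by have := List.length_pos_iff.mpr h₁; omega⟩
    have hlen2 : u₂.length = n + 1 := by omega
    have core : ∀ (p : ℕ → Prop) (hp : DecidablePred p) (x y : R),
        ∑ i ∈ Finset.range (n + 1),
          ((if p (u₁.getD i 0) then α₁ else 0) + (if p (u₂.getD i 0) then α₂ else 0)) •
            sandwich y i x (n - i) = 0 := by
      intro p hp x y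
      obtain ⟨c₁, -, hc11, hce1⟩ := expand (K := K) p x y u₁ h₁
      obtain ⟨c₂, -, hc21, hce2⟩ := expand (K := K) p x y u₂ h₂
      have key : ∀ t : K, t ∉ (∅ : Finset K) →
          ∑ k ∈ Finset.range (n + 1 + 1), t ^ k • (α₁ • c₁ k + α₂ • c₂ k) = 0 := by
        intro t _
        have h0 := hid (fun i => if p i then t • x + y else y)
        rw [hce1 t, hce2 t, hlen1, hlen2, Finset.smul_sum, Finset.smul_sum,
          ← Finset.sum_add_distrib] at h0
        rw [← h0]
        apply Finset.sum_congr rfl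
        intro k _
        rw [smul_add, smul_smul, smul_smul, mul_comm (t ^ k) α₁, mul_comm (t ^ k) α₂,
          mul_smul, mul_smul]
      have h1 := vand htf (n + 1 + 1) ∅ _ key 1 (by omega)
      rw [hc11, hc21, hlen1, hlen2, Finset.smul_sum, Finset.smul_sum,
        ← Finset.sum_add_distrib] at h1
      rw [← h1]
      apply Finset.sum_congr rfl
      intro i _
      rw [show n + 1 - 1 - i = n - i from by omega]
      by_cases hP : p (u₁.getD i 0) <;> by_cases hQ : p (u₂.getD i 0) <;>
        simp [hP, hQ, add_smul]
    have hhead1 : u₁.head? = some (u₁.getD 0 0) := by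
      obtain ⟨a, t, rfl⟩ := List.exists_cons_of_ne_nil h₁
      simp
    have hhead2 : u₂.head? = some (u₂.getD 0 0) := by
      obtain ⟨a, t, rfl⟩ := List.exists_cons_of_ne_nil h₂
      simp
    have hlast1 : u₁.getLast? = some (u₁.getD n 0) := by
      have hn' : n < u₁.length := by omega
      rw [List.getLast?_eq_getElem?, show u₁.length - 1 = n by omega,
        List.getElem?_eq_getElem hn']
      simp [List.getD_eq_getElem?_getD, List.getElem?_eq_getElem hn']
    have hlast2 : u₂.getLast? = some (u₂.getD n 0) := by
      have hn' : n < u₂.length := by omega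
      rw [List.getLast?_eq_getElem?, show u₂.length - 1 = n by omega,
        List.getElem?_eq_getElem hn']
      simp [List.getD_eq_getElem?_getD, List.getElem?_eq_getElem hn']
    have mk : ∀ (p : ℕ → Prop) (hp : DecidablePred p),
        ∃ α : Fin (n + 1) → K,
          α 0 = ((if p (u₁.getD 0 0) then α₁ else 0) + (if p (u₂.getD 0 0) then α₂ else 0)) ∧
          α (Fin.last n) =
            ((if p (u₁.getD n 0) then α₁ else 0) + (if p (u₂.getD n 0) then α₂ else 0)) ∧
          ∀ x y : R, ∑ i : Fin (n + 1), α i • sandwich y (i : ℕ) x (n - (i : ℕ)) = 0 := by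
      intro p hp
      refine ⟨fun i => (if p (u₁.getD (i : ℕ) 0) then α₁ else 0) +
          (if p (u₂.getD (i : ℕ) 0) then α₂ else 0), by simp, by simp, ?_⟩
      intro x y
      exact (Fin.sum_univ_eq_sum_range
        (fun i => ((if p (u₁.getD i 0) then α₁ else 0) +
          (if p (u₂.getD i 0) then α₂ else 0)) • sandwich y i x (n - i)) (n + 1)).trans
        (core p hp x y)
    refine ⟨?_, ?_, ?_⟩
    · intro hh
      have ha : u₁.getD 0 0 ≠ u₂.getD 0 0 := by
        rw [hhead1, hhead2] at hh
        exact fun h => hh (by rw [h])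
      obtain ⟨α, hα0, -, hαid⟩ := mk (· = u₁.getD 0 0) (fun z => Classical.propDecidable _)
      refine ⟨n, α, ?_, hαid⟩
      rw [hα0, if_pos rfl, if_neg (fun h => ha h.symm), add_zero]
      exact hα₁
    · intro hl
      have hb : u₁.getD n 0 ≠ u₂.getD n 0 := by
        rw [hlast1, hlast2] at hl
        exact fun h => hl (by rw [h])
      obtain ⟨α, -, hαl, hαid⟩ := mk (· = u₁.getD n 0) (fun z => Classical.propDecidable _)
      refine ⟨n, α, ?_, hαid⟩
      rw [hαl, if_pos rfl, if_neg (fun h => hb h.symm), add_zero]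
      exact hα₁
    · intro hh hl
      have ha : u₁.getD 0 0 ≠ u₂.getD 0 0 := by
        rw [hhead1, hhead2] at hh
        exact fun h => hh (by rw [h])
      have hb : u₁.getD n 0 ≠ u₂.getD n 0 := by
        rw [hlast1, hlast2] at hl
        exact fun h => hl (by rw [h])
      by_cases h11 : u₁.getD n 0 = u₁.getD 0 0
      · obtain ⟨α, hα0, hαl, hαid⟩ := mk (· = u₁.getD 0 0) (fun z => Classical.propDecidable _)
        refine ⟨n, α, ?_, ?_, hαid⟩
        · rw [hα0, if_pos rfl, if_neg (fun h => ha h.symm), add_zero]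
          exact hα₁
        · rw [hαl, if_pos h11, if_neg (fun h => hb (h11.trans h.symm)), add_zero]
          exact hα₁
      by_cases h12 : u₂.getD n 0 = u₁.getD 0 0
      · obtain ⟨α, hα0, hαl, hαid⟩ := mk (· = u₁.getD 0 0) (fun z => Classical.propDecidable _)
        refine ⟨n, α, ?_, ?_, hαid⟩
        · rw [hα0, if_pos rfl, if_neg (fun h => ha h.symm), add_zero]
          exact hα₁
        · rw [hαl, if_neg h11, if_pos h12, zero_add]
          exact hα₂
      by_cases h21 : u₁.getD n 0 = u₂.getD 0 0
      · obtain ⟨α, hα0, hαl, hαid⟩ := mk (· = u₂.getD 0 0) (fun z => Classical.propDecidable _)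
        refine ⟨n, α, ?_, ?_, hαid⟩
        · rw [hα0, if_neg (fun h => ha h), if_pos rfl, zero_add]
          exact hα₂
        · rw [hαl, if_pos h21, if_neg (fun h => hb (h21.trans h.symm)), add_zero]
          exact hα₁
      by_cases h22 : u₂.getD n 0 = u₂.getD 0 0
      · obtain ⟨α, hα0, hαl, hαid⟩ := mk (· = u₂.getD 0 0) (fun z => Classical.propDecidable _)
        refine ⟨n, α, ?_, ?_, hαid⟩
        · rw [hα0, if_neg (fun h => ha h), if_pos rfl, zero_add]
          exact hα₂
        · rw [hαl, if_neg h21, if_pos h22, zero_add]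
          exact hα₂
      · obtain ⟨α, hα0, hαl, hαid⟩ :=
          mk (fun z => z = u₁.getD 0 0 ∨ z = u₁.getD n 0)
            (fun z => Classical.propDecidable _)
        refine ⟨n, α, ?_, ?_, hαid⟩
        · have hneg : ¬(u₂.getD 0 0 = u₁.getD 0 0 ∨ u₂.getD 0 0 = u₁.getD n 0) := by
            rintro (h | h)
            · exact ha h.symm
            · exact h21 h.symm
          rw [hα0, if_pos (Or.inl rfl), if_neg hneg, add_zero]
          exact hα₁
        · have hneg : ¬(u₂.getD n 0 = u₁.getD 0 0 ∨ u₂.getD n 0 = u₁.getD n 0) := by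
            rintro (h | h)
            · exact h12 h
            · exact hb h.symm
          rw [hαl, if_pos (Or.inr rfl), if_neg hneg, add_zero]
          exact hα₁
end

section
/- If an associative ring R satisfies the identity yⁿ = 0 (every element of R is nilpotent of index at most n), then R satisfies the Engel identity e_{2n−1} = 0, i.e. [x, y, y, …, y] = 0 with 2n−1 copies of y, for all x, y ∈ R. -/
/-- The left-normed Engel commutator `e_n(x,y) = [x, y, …, y]` (`n` copies of `y`),
where `[a,b] = a * b - b * a`. -/
def engel {R : Type*} [NonUnitalRing R] (x y : R) : ℕ → R
  | 0 => x
  | n + 1 => engel x y n * y - y * engel x y n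

lemma opow_succ {S : Type*} (op : S → S → S) (x : S) (t : ℕ) (ht : 1 ≤ t) :
    opow op x (t + 1) = op (opow op x t) x := by
  obtain ⟨s, rfl⟩ : ∃ s, t = s + 1 := ⟨t - 1, by omega⟩
  show (fun a => op a x)^[s + 1 + 1 - 1] x = op ((fun a => op a x)^[s + 1 - 1] x) x
  simp only [Nat.add_sub_cancel]
  rw [Function.iterate_succ_apply']

lemma inr_opow {R : Type*} [NonUnitalRing R] (y : R) (t : ℕ) (ht : 1 ≤ t) :
    (Unitization.inr (opow (· * ·) y t) : Unitization ℤ R) = (Unitization.inr y) ^ t := by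
  induction t with
  | zero => omega
  | succ s ih =>
    rcases Nat.eq_or_lt_of_le ht with h1 | h1
    · simp only [← h1]
      show (Unitization.inr ((fun a => a * y)^[0] y) : Unitization ℤ R) = _
      simp
    · have hs : 1 ≤ s := by omega
      rw [opow_succ _ _ _ hs, Unitization.inr_mul, ih hs, pow_succ]

lemma inr_engel {R : Type*} [NonUnitalRing R] (x y : R) (m : ℕ) :
    (Unitization.inr (engel x y m) : Unitization ℤ R)
      = engel (Unitization.inr x) (Unitization.inr y) m := by
  induction m with
  | zero => rfl
  | succ k ih => rw [engel, engel, Unitization.inr_sub, Unitization.inr_mul,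
      Unitization.inr_mul, ih]

open LinearMap in
lemma engel_eq_pow {A : Type*} [Ring A] (x y : A) (m : ℕ) :
    engel x y m = ((mulRight ℤ y - mulLeft ℤ y) ^ m) x := by
  induction m with
  | zero => simp [engel]
  | succ k ih =>
    rw [engel, ih, pow_succ']
    simp [Module.End.mul_apply]

open LinearMap in
lemma engel_eq_zero_of_pow {A : Type*} [Ring A] (x y : A) (n : ℕ) (hn : 1 ≤ n)
    (hy : y ^ n = 0) : engel x y (2 * n - 1) = 0 := by
  rw [engel_eq_pow]
  have hc : Commute (mulRight ℤ y) (-(mulLeft ℤ y)) :=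
    ((commute_mulLeft_right y y).symm).neg_right
  rw [sub_eq_add_neg, hc.add_pow, LinearMap.sum_apply]
  apply Finset.sum_eq_zero
  intro i hi
  rw [Finset.mem_range] at hi
  have hij : i ≥ n ∨ (2 * n - 1 - i) ≥ n := by omega
  rcases hij with hge | hge
  · have h0 : y ^ i = 0 := pow_eq_zero_of_le hge hy
    rw [Module.End.mul_apply, Module.End.mul_apply, pow_mulRight, h0]
    simp
  · have h0 : y ^ (2 * n - 1 - i) = 0 := pow_eq_zero_of_le hge hy
    have hL : (-mulLeft ℤ y) ^ (2 * n - 1 - i) = 0 := by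
      rw [neg_pow, pow_mulLeft, h0]
      simp [LinearMap.ext_iff]
    rw [Module.End.mul_apply, Module.End.mul_apply, hL]
    simp

/-- Proposition 2.1(iv): if an associative ring `R` satisfies the identity `yⁿ = 0`
(every element is nilpotent of index at most `n`), then `R` satisfies the Engel identity
`e_{2n-1} = 0`. -/
theorem engel_of_bounded_nil (R : Type*) [NonUnitalRing R] (n : ℕ) (hn : 1 ≤ n)
    (h : ∀ r : R, opow (· * ·) r n = 0) :
    ∀ x y : R, engel x y (2 * n - 1) = 0 := by
  intro x y
  apply Unitization.inr_injective (R := ℤ)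
  rw [inr_engel, Unitization.inr_zero]
  exact engel_eq_zero_of_pow _ _ n hn
    (by rw [← inr_opow y n hn, h, Unitization.inr_zero])
end

section
/- Let K be an infinite commutative domain and R an associative K-algebra with torsion-free K-action. If the semigroup (R,∘) satisfies a semigroup identity u(x,y) = v(x,y), written u = a u' b and v = a v' b where a is the longest common prefix, b is the longest common suffix, and u' = v' is reduced, then (R,∘) also satisfies the reduced identity u' = v'. -/
/-- The circle operation `x ∘ y = x + y + x * y`. -/
def circleOp {R : Type*} [Add R] [Mul R] (a b : R) : R := a + b + a * b


open Polynomial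

-- core vanishing lemma
theorem coeff_vanish {K M : Type*} [CommRing K] [IsDomain K] [Infinite K]
    [AddCommMonoid M] [Module K M]
    (htf : ∀ (k : K) (m : M), k ≠ 0 → k • m = 0 → m = 0)
    (n : ℕ) (c : ℕ → M)
    (h : ∀ t : K, ∑ i ∈ Finset.range n, t ^ i • c i = 0) :
    ∀ i < n, c i = 0 := by
  let e : ℕ ↪ K := Infinite.natEmbedding K
  set v : Fin n → K := fun i => e i with hv
  have hvinj : Function.Injective v := fun i j hij => by
    ext; exact e.injective hij
  set A : Matrix (Fin n) (Fin n) K := Matrix.vandermonde v with hA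
  have hdet : A.det ≠ 0 := by
    rw [hA, Matrix.det_vandermonde]
    refine Finset.prod_ne_zero_iff.mpr fun i _ => Finset.prod_ne_zero_iff.mpr fun j hj => ?_
    rw [sub_ne_zero]
    intro hEq
    have := hvinj hEq
    simp [Finset.mem_Ioi] at hj
    omega
  have h' : ∀ i : Fin n, ∑ j : Fin n, A i j • c j = 0 := by
    intro i
    have := h (v i)
    rw [← Fin.sum_univ_eq_sum_range (fun j => (v i) ^ j • c j) n] at this
    simpa [hA, Matrix.vandermonde] using this
  have key : ∀ k : Fin n, A.det • c k = 0 := by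
    intro k
    have h1 : A.det • c k = ∑ j : Fin n, ((A.det • (1 : Matrix (Fin n) (Fin n) K)) k j) • c j := by
      simp [Matrix.smul_apply, Matrix.one_apply, ite_smul, smul_smul]
    rw [← Matrix.adjugate_mul A] at h1
    rw [h1]
    calc ∑ j : Fin n, ((A.adjugate * A) k j) • c j
        = ∑ j : Fin n, ∑ i : Fin n, (A.adjugate k i * A i j) • c j := by
          simp [Matrix.mul_apply, Finset.sum_smul]
      _ = ∑ i : Fin n, A.adjugate k i • ∑ j : Fin n, A i j • c j := by
          rw [Finset.sum_comm]
          simp [Finset.smul_sum, mul_smul]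
      _ = 0 := by simp [h']
  intro i hi
  exact htf _ _ hdet (key ⟨i, hi⟩)

/-- Evaluation of a polynomial over a `K`-algebra at a scalar point, as a ring hom. -/
noncomputable def scalarEval {K A : Type*} [CommRing K] [Ring A] [Algebra K A] (t : K) :
    Polynomial A →+* A :=
  Polynomial.eval₂RingHom' (RingHom.id A) (algebraMap K A t)
    (fun a => ((Algebra.commutes t a).symm : a * algebraMap K A t = algebraMap K A t * a))

@[simp] theorem scalarEval_C {K A : Type*} [CommRing K] [Ring A] [Algebra K A] (t : K) (a : A) :
    scalarEval (K := K) t (C a) = a := by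
  simp [scalarEval, Polynomial.eval₂RingHom', Polynomial.eval₂_C]

@[simp] theorem scalarEval_X {K A : Type*} [CommRing K] [Ring A] [Algebra K A] (t : K) :
    scalarEval (K := K) t (X : Polynomial A) = algebraMap K A t := by
  simp [scalarEval, Polynomial.eval₂RingHom', Polynomial.eval₂_X]

theorem eq_zero_of_scalarEval_zero {K A : Type*} [CommRing K] [IsDomain K] [Infinite K]
    [Ring A] [Algebra K A]
    (htf : ∀ (k : K) (m : A), k ≠ 0 → k • m = 0 → m = 0)
    (p : Polynomial A) (h : ∀ t : K, scalarEval (K := K) t p = 0) : p = 0 := by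
  have key : ∀ t : K, ∑ i ∈ Finset.range (p.natDegree + 1), t ^ i • p.coeff i = 0 := by
    intro t
    have h0 := h t
    rw [show scalarEval (K := K) t p
        = Polynomial.eval₂ (RingHom.id A) (algebraMap K A t) p from rfl,
      Polynomial.eval₂_eq_sum] at h0
    rw [p.sum_over_range' (by simp) (p.natDegree + 1) (Nat.lt_succ_self _)] at h0
    rw [← h0]
    refine Finset.sum_congr rfl fun i _ => ?_
    rw [Algebra.smul_def, ← map_pow, Algebra.commutes, map_pow]
    simp
  have hvan := coeff_vanish htf _ _ key
  ext i
  simp only [coeff_zero]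
  by_cases hi : i < p.natDegree + 1
  · exact hvan i hi
  · exact p.coeff_eq_zero_of_natDegree_lt (by omega)

theorem isLeftRegular_one_add_X_mul_C {A : Type*} [Ring A] (z : A) :
    IsLeftRegular ((1 : Polynomial A) + X * C z) := by
  intro q₁ q₂ hq
  have hq2 : ((1 : Polynomial A) + X * C z) * (q₁ - q₂) = 0 := by
    rw [mul_sub, sub_eq_zero]; exact hq
  rw [← sub_eq_zero]
  clear hq
  rename' hq2 => hq
  set q := q₁ - q₂ with hqdef
  ext n
  simp only [coeff_zero]
  induction n with
  | zero =>
    have := congrArg (fun p => Polynomial.coeff p 0) hq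
    simpa [Polynomial.mul_coeff_zero] using this
  | succ n ih =>
    have := congrArg (fun p => Polynomial.coeff p (n + 1)) hq
    simp only [add_mul, one_mul, mul_assoc, Polynomial.coeff_add, Polynomial.coeff_X_mul,
      Polynomial.coeff_C_mul, coeff_zero, ih, mul_zero, add_zero] at this
    exact this

theorem isRightRegular_one_add_X_mul_C {A : Type*} [Ring A] (z : A) :
    IsRightRegular ((1 : Polynomial A) + X * C z) := by
  intro q₁ q₂ hq
  have hq2 : (q₁ - q₂) * ((1 : Polynomial A) + X * C z) = 0 := by
    rw [sub_mul, sub_eq_zero]; exact hq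
  rw [← sub_eq_zero]
  clear hq
  rename' hq2 => hq
  set q := q₁ - q₂ with hqdef
  ext n
  simp only [coeff_zero]
  induction n with
  | zero =>
    have := congrArg (fun p => Polynomial.coeff p 0) hq
    simpa [Polynomial.mul_coeff_zero] using this
  | succ n ih =>
    have := congrArg (fun p => Polynomial.coeff p (n + 1)) hq
    rw [show X * C z = C z * X from (Polynomial.commute_X (C z)).eq] at this
    simp only [mul_add, mul_one, ← mul_assoc, Polynomial.coeff_add, Polynomial.coeff_mul_X,
      Polynomial.coeff_mul_C, coeff_zero, ih, zero_mul, add_zero] at this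
    exact this

theorem isLeftRegular_C {A : Type*} [Semiring A] {p : A} (hp : IsLeftRegular p) :
    IsLeftRegular (C p : Polynomial A) := by
  intro q₁ q₂ hq
  ext n
  apply hp
  have := congrArg (fun r => Polynomial.coeff r n) hq
  simpa [Polynomial.coeff_C_mul] using this

theorem isRightRegular_C {A : Type*} [Semiring A] {p : A} (hp : IsRightRegular p) :
    IsRightRegular (C p : Polynomial A) := by
  intro q₁ q₂ hq
  ext n
  apply hp
  have := congrArg (fun r => Polynomial.coeff r n) hq
  simpa [Polynomial.coeff_mul_C] using this

theorem circle_foldl_prod {K R : Type*} [CommRing K] [NonUnitalRing R] [Module K R]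
    [IsScalarTower K R R] [SMulCommClass K R R] (ψ : ℕ → R) :
    ∀ (w : List ℕ) (r : R),
      (1 : Unitization K R) + ↑(w.foldl (fun a j => circleOp a (ψ j)) r) =
        ((1 : Unitization K R) + ↑r) *
          (w.map fun i => (1 : Unitization K R) + ↑(ψ i)).prod := by
  intro w
  induction w with
  | nil => intro r; simp
  | cons j w ih =>
    intro r
    have key : (1 : Unitization K R) + ↑(circleOp r (ψ j)) =
        ((1 : Unitization K R) + ↑r) * (1 + ↑(ψ j)) := by
      simp only [circleOp, Unitization.inr_add, Unitization.inr_mul]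
      rw [add_mul, one_mul, mul_add, mul_one]
      abel
    simp only [List.foldl_cons, List.map_cons, List.prod_cons, ih (circleOp r (ψ j)), key,
      mul_assoc]

theorem circle_evalWord_prod {K R : Type*} [CommRing K] [NonUnitalRing R] [Module K R]
    [IsScalarTower K R R] [SMulCommClass K R R] (ψ : ℕ → R) (w : List ℕ) (hw : w ≠ []) :
    (1 : Unitization K R) + ↑(evalWord circleOp ψ w) =
      (w.map fun i => (1 : Unitization K R) + ↑(ψ i)).prod := by
  match w with
  | [] => exact absurd rfl hw
  | i :: t =>
    show (1 : Unitization K R) + ↑(t.foldl (fun a j => circleOp a (ψ j)) (ψ i)) = _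
    rw [circle_foldl_prod, List.map_cons, List.prod_cons]

theorem tf_polynomial {K A : Type*} [CommRing K] [Ring A] [Module K A]
    (htf : ∀ (k : K) (m : A), k ≠ 0 → k • m = 0 → m = 0) :
    ∀ (k : K) (p : Polynomial A), k ≠ 0 → k • p = 0 → p = 0 := by
  intro k p hk hkp
  ext n
  have := congrArg (fun q => Polynomial.coeff q n) hkp
  simp only [Polynomial.coeff_smul, Polynomial.coeff_zero] at this
  simpa using htf k _ hk this


set_option maxHeartbeats 1000000 in
set_option synthInstance.maxHeartbeats 400000 in
/-- Proposition 2.2(ii): if the circle semigroup `(R,∘)` of an algebra `R` over an infinite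
commutative domain `K` with torsion-free action satisfies a two-variable semigroup identity
`u(x,y) = v(x,y)`, written `u = a u' b` and `v = a v' b` where `a` is the longest common
prefix, `b` is the longest common suffix and `u' = v'` is reduced (this is encoded by the
hypotheses that the first letters of `u'`, `v'` differ and the last letters differ), then
`(R,∘)` also satisfies the reduced identity `u' = v'`.  Variables: `x = 0`, `y = 1`. -/
theorem circle_identity_reduces (K R : Type*) [CommRing K] [IsDomain K]
    [Infinite K] [NonUnitalRing R] [Module K R] [IsScalarTower K R R] [SMulCommClass K R R]
    (htf : ∀ (k : K) (r : R), k ≠ 0 → k • r = 0 → r = 0)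
    (a b u' v' : List ℕ) (hu' : u' ≠ []) (hv' : v' ≠ [])
    (hvars_u : ∀ i ∈ a ++ u' ++ b, i < 2) (hvars_v : ∀ i ∈ a ++ v' ++ b, i < 2)
    (hleft : u'.head? ≠ v'.head?) (hright : u'.getLast? ≠ v'.getLast?)
    (hid : ∀ φ : ℕ → R,
      evalWord circleOp φ (a ++ u' ++ b) = evalWord circleOp φ (a ++ v' ++ b)) :
    ∀ φ : ℕ → R, evalWord circleOp φ u' = evalWord circleOp φ v' := by
  classical
  intro φ
  -- torsion-freeness of the unitization and its polynomial rings
  have htfS : ∀ (k : K) (m : Unitization K R), k ≠ 0 → k • m = 0 → m = 0 := by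
    intro k m hk hkm
    have h1 := congrArg (fun x : Unitization K R => x.fst) hkm
    have h2 := congrArg (fun x : Unitization K R => x.snd) hkm
    simp only [Unitization.fst_smul, Unitization.fst_zero, Unitization.snd_smul,
      Unitization.snd_zero, smul_eq_mul] at h1 h2
    ext
    · exact (mul_eq_zero.mp h1).resolve_left hk
    · exact htf k _ hk h2
  have htfPS := tf_polynomial (K := K) (A := Unitization K R) htfS
  -- the letter polynomials: outer `X` tracks the scalar of variable `0`,
  -- inner `X` (i.e. `C X`) the scalar of the other variables
  set S := Unitization K R with hSdef
  set L : ℕ → Polynomial (Polynomial S) := fun i =>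
    1 + (if i = 0 then (X : Polynomial (Polynomial S)) else C X) * C (C (↑(φ i) : S)) with hL
  set P : List ℕ → Polynomial (Polynomial S) := fun w => (w.map L).prod with hP
  set ψ : K → K → ℕ → R := fun t s i => if i = 0 then t • φ 0 else s • φ i with hψ
  have hev : ∀ (t s : K) (i : ℕ),
      scalarEval (K := K) s (scalarEval (K := K) t (L i)) = 1 + (↑(ψ t s i) : S) := by
    intro t s i
    by_cases h0 : i = 0 <;>
      · simp [hL, hψ, h0, Polynomial.algebraMap_apply]
        rw [Algebra.smul_def]
        exact (Algebra.commutes _ _).symm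
  have hprod : ∀ (t s : K) (w : List ℕ),
      scalarEval (K := K) s (scalarEval (K := K) t (P w)) =
        (w.map fun i => (1 : S) + ↑(ψ t s i)).prod := by
    intro t s w
    rw [hP]
    rw [map_list_prod, map_list_prod, List.map_map, List.map_map]
    exact congrArg List.prod (List.map_congr_left (fun i _ => hev t s i))
  -- the polynomial identity
  have hQ : P (a ++ u' ++ b) = P (a ++ v' ++ b) := by
    rw [← sub_eq_zero]
    apply eq_zero_of_scalarEval_zero (K := K) htfPS
    intro t
    apply eq_zero_of_scalarEval_zero (K := K) htfS
    intro s
    rw [map_sub, map_sub, hprod, hprod, sub_eq_zero]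
    have h1 := circle_evalWord_prod (K := K) (ψ t s) (a ++ u' ++ b) (by simp [hu'])
    have h2 := circle_evalWord_prod (K := K) (ψ t s) (a ++ v' ++ b) (by simp [hv'])
    rw [← h1, ← h2, hid (ψ t s)]
  -- cancellation in the polynomial ring
  have hPappend : ∀ w w' : List ℕ, P (w ++ w') = P w * P w' := by
    intro w w'
    rw [hP]
    simp [List.map_append, List.prod_append]
  have hLleft : ∀ i, IsLeftRegular (L i) := by
    intro i
    rw [hL]
    by_cases h0 : i = 0
    · simpa [h0] using isLeftRegular_one_add_X_mul_C (C (↑(φ i) : S))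
    · have : (1 : Polynomial (Polynomial S)) + C X * C (C (↑(φ i) : S)) =
          C (1 + X * C (↑(φ i) : S)) := by
        rw [Polynomial.C_add, Polynomial.C_1, Polynomial.C_mul]
      simpa [h0, this] using isLeftRegular_C (isLeftRegular_one_add_X_mul_C (↑(φ i) : S))
  have hLright : ∀ i, IsRightRegular (L i) := by
    intro i
    rw [hL]
    by_cases h0 : i = 0
    · simpa [h0] using isRightRegular_one_add_X_mul_C (C (↑(φ i) : S))
    · have : (1 : Polynomial (Polynomial S)) + C X * C (C (↑(φ i) : S)) =
          C (1 + X * C (↑(φ i) : S)) := by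
        rw [Polynomial.C_add, Polynomial.C_1, Polynomial.C_mul]
      simpa [h0, this] using isRightRegular_C (isRightRegular_one_add_X_mul_C (↑(φ i) : S))
  have hPleft : ∀ w : List ℕ, IsLeftRegular (P w) := by
    intro w
    induction w with
    | nil => simpa [hP] using isRegular_one.left
    | cons i w ih =>
      have : P (i :: w) = L i * P w := by simp [hP]
      rw [this]
      exact (hLleft i).mul ih
  have hPright : ∀ w : List ℕ, IsRightRegular (P w) := by
    intro w
    induction w with
    | nil => simpa [hP] using isRegular_one.right
    | cons i w ih =>
      have : P (i :: w) = L i * P w := by simp [hP]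
      rw [this]
      exact (hLright i).mul ih
  have hcan : P u' = P v' := by
    have h1 : P a * (P u' * P b) = P a * (P v' * P b) := by
      have := hQ
      rw [hPappend, hPappend, hPappend, hPappend, mul_assoc, mul_assoc] at this
      exact this
    have h2 : P u' * P b = P v' * P b := hPleft a h1
    exact hPright b h2
  -- evaluate at t = s = 1
  have hψ11 : ψ 1 1 = φ := by
    funext i
    by_cases h0 : i = 0 <;> simp [hψ, h0]
  have hfin : (1 : S) + ↑(evalWord circleOp φ u') = 1 + ↑(evalWord circleOp φ v') := by
    rw [circle_evalWord_prod (K := K) φ u' hu', circle_evalWord_prod (K := K) φ v' hv',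
      ← hψ11]
    rw [← hprod 1 1 u', ← hprod 1 1 v', hcan]
  exact Unitization.inr_injective (add_left_cancel hfin)
end

section
/- Let K be an infinite commutative domain and R an associative K-algebra with torsion-free K-action. Suppose R satisfies the identity y^m α(x,y) y^k = 0 for all x, y ∈ R, where α(x,y) = Σ_{i=0}^n α_i yⁱ x y^{n−i} with α_i ∈ K and α₀ ≠ 0 (left reduced). Then R satisfies the identity y^m e_n(x,y) y^{n+k} = 0 for all x, y ∈ R. -/
namespace EngelProofAux

open Polynomial

/-! ### Generic polynomial lemmas -/

section PolyLemmas

variable {S : Type*} [CommRing S]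

lemma natDegree_one_add_X_mul_C_pow (b : S) (e : ℕ) :
    ((1 + X * C b) ^ e).natDegree ≤ e := by
  refine le_trans (natDegree_pow_le) ?_
  have h1 : (1 + X * C b).natDegree ≤ 1 := by
    refine le_trans (natDegree_add_le _ _) ?_
    simp only [natDegree_one, max_le_iff]
    constructor
    · omega
    · refine le_trans (natDegree_mul_le) ?_
      simp [natDegree_X_le]
  calc e * (1 + X * C b).natDegree ≤ e * 1 := Nat.mul_le_mul_left e h1
    _ = e := mul_one e

lemma reflect_one_add_X_mul_C (b : S) :
    reflect 1 (1 + X * C b) = X + C b := by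
  rw [reflect_add]
  have h1 : reflect 1 (1 : S[X]) = X := by
    rw [← C_1, reflect_C]
    simp
  have h2 : reflect 1 (X * C b) = C b := by
    rw [mul_comm, reflect_C_mul, ← pow_one (X : S[X]), reflect_monomial]
    rw [revAt_le (by omega)]
    simp
  rw [h1, h2]

lemma reflect_one_add_X_mul_C_pow (b : S) (e : ℕ) :
    reflect e ((1 + X * C b) ^ e) = (X + C b) ^ e := by
  induction e with
  | zero => simp
  | succ e ih =>
      have h : (1 + X * C b) ^ (e + 1) = (1 + X * C b) * (1 + X * C b) ^ e := pow_succ' _ _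
      rw [h, show e + 1 = 1 + e from Nat.add_comm e 1,
        reflect_mul _ _ (by simpa using natDegree_one_add_X_mul_C_pow b 1)
          (natDegree_one_add_X_mul_C_pow b e),
        reflect_one_add_X_mul_C, ih, ← pow_succ', Nat.add_comm 1 e]

lemma reflect_sum {ι : Type*} [DecidableEq ι] (s : Finset ι) (f : ι → S[X]) (N : ℕ) :
    reflect N (∑ i ∈ s, f i) = ∑ i ∈ s, reflect N (f i) := by
  induction s using Finset.induction_on with
  | empty => simp
  | insert _ _ hne ih => rw [Finset.sum_insert hne, Finset.sum_insert hne, reflect_add, ih]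

end PolyLemmas

variable {K R : Type*} [CommRing K] [NonUnitalRing R] [Module K R]
  [IsScalarTower K R R] [SMulCommClass K R R]

noncomputable section

variable (K)

/-! ### The evaluation homomorphism `K[v][u] →+* End K R` -/

/-- inner evaluation: `Y ↦ mulRight y`. -/
def epsV (y : R) : Polynomial K →+* Module.End K R :=
  (Polynomial.aeval (LinearMap.mulRight K y)).toRingHom

lemma epsV_commute (y : R) (p : Polynomial K) :
    Commute (epsV K y p) (LinearMap.mulLeft K y) := by
  induction p using Polynomial.induction_on with
  | C a => simpa [epsV] using (Algebra.commute_algebraMap_left a _)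
  | add p q hp hq => simpa [map_add] using hp.add_left hq
  | monomial n a ih =>
      have h1 : Commute (LinearMap.mulRight K y) (LinearMap.mulLeft K y) :=
        (LinearMap.commute_mulLeft_right (R := K) y y).symm
      simpa [epsV, mul_pow, map_mul, map_pow] using
        ((Algebra.commute_algebraMap_left a _).mul_left ((h1.pow_left (n + 1))))

/-- full evaluation `K[Y][X] →+* End`, `X ↦ mulLeft y`, `Y ↦ mulRight y`. -/
def eps (y : R) : Polynomial (Polynomial K) →+* Module.End K R :=
  Polynomial.eval₂RingHom' (epsV K y) (LinearMap.mulLeft K y) (epsV_commute K y)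

@[simp] lemma eps_X (y : R) : eps K y X = LinearMap.mulLeft K y := by
  simp [eps, Polynomial.eval₂RingHom']

@[simp] lemma eps_CX (y : R) : eps K y (C X) = LinearMap.mulRight K y := by
  simp [eps, Polynomial.eval₂RingHom', epsV]

@[simp] lemma eps_CC (y : R) (a : K) : eps K y (C (C a)) = algebraMap K _ a := by
  simp [eps, Polynomial.eval₂RingHom', epsV]

lemma sandwich_eq (y : R) (a b : ℕ) (r : R) :
    sandwich y a r b = ((LinearMap.mulLeft K y) ^ a) (((LinearMap.mulRight K y) ^ b) r) := by
  have hL : ∀ s : R, ((LinearMap.mulLeft K y) ^ a) s = (fun t => y * t)^[a] s := by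
    intro s
    rw [Module.End.pow_apply]
    induction a generalizing s with
    | zero => rfl
    | succ a ih => rw [Function.iterate_succ_apply, Function.iterate_succ_apply, ih]; simp
  have hR : ((LinearMap.mulRight K y) ^ b) r = (fun t => t * y)^[b] r := by
    rw [Module.End.pow_apply]
    induction b generalizing r with
    | zero => rfl
    | succ b ih => rw [Function.iterate_succ_apply, Function.iterate_succ_apply, ih]; simp
  rw [hL, hR, sandwich]

lemma engel_eq (x y : R) (n : ℕ) :
    engel x y n = ((LinearMap.mulRight K y - LinearMap.mulLeft K y) ^ n) x := by
  induction n with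
  | zero => simp [engel]
  | succ n ih =>
      rw [engel, ih, pow_succ']
      simp [Module.End.mul_apply, LinearMap.sub_apply]

/-! ### Vandermonde argument -/

lemma vandermonde_zero {M : Type*} [AddCommGroup M] [Module K M] [IsDomain K] [Infinite K]
    (htf : ∀ (c : K) (r : M), c ≠ 0 → c • r = 0 → r = 0)
    (N : ℕ) (f : ℕ → M) (h : ∀ c : K, ∑ r ∈ Finset.range N, c ^ r • f r = 0) :
    ∀ r, r < N → f r = 0 := by
  intro r₀ hr₀
  set g : Fin N → K := fun s => (Infinite.natEmbedding K) (s : ℕ) with hg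
  have hginj : Function.Injective g := by
    intro s t hst
    exact Fin.ext (((Infinite.natEmbedding K).injective) hst)
  set Vm := Matrix.vandermonde g with hVm
  have hdet : Vm.det ≠ 0 := Matrix.det_vandermonde_ne_zero_iff.mpr hginj
  have hrow : ∀ j : Fin N, ∑ i : Fin N, Vm j i • f (i : ℕ) = 0 := by
    intro j
    have := h (g j)
    rw [Finset.sum_range fun i => (g j) ^ i • f i] at this
    simpa [hVm, Matrix.vandermonde] using this
  have key : Vm.det • f r₀ = 0 := by
    have hcollapse :
        ∑ i : Fin N, ((Vm.det • (1 : Matrix (Fin N) (Fin N) K)) ⟨r₀, hr₀⟩ i) • f (i : ℕ)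
          = Vm.det • f r₀ := by
      rw [Finset.sum_eq_single (⟨r₀, hr₀⟩ : Fin N)]
      · simp [Matrix.smul_apply, Matrix.one_apply]
      · intro b _ hb
        simp [Matrix.smul_apply, Matrix.one_apply, (Ne.symm hb)]
      · simp
    calc Vm.det • f r₀
        = ∑ i : Fin N, ((Vm.adjugate * Vm) ⟨r₀, hr₀⟩ i) • f (i : ℕ) := by
          rw [Matrix.adjugate_mul]; exact hcollapse.symm
      _ = ∑ i : Fin N, (∑ j : Fin N, Vm.adjugate ⟨r₀, hr₀⟩ j * Vm j i) • f (i : ℕ) := by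
          simp [Matrix.mul_apply]
      _ = ∑ j : Fin N, Vm.adjugate ⟨r₀, hr₀⟩ j • (∑ i : Fin N, Vm j i • f (i : ℕ)) := by
          simp only [Finset.sum_smul, mul_smul, Finset.smul_sum]
          exact Finset.sum_comm
      _ = 0 := by
          simp [hrow]
  exact htf _ _ hdet key

/-! ### The substitution `u ↦ u + λu², v ↦ v + λv²` -/

def Xi : Polynomial (Polynomial K) →+* Polynomial (Polynomial (Polynomial K)) :=
  Polynomial.eval₂RingHom
    (Polynomial.eval₂RingHom (algebraMap K (Polynomial (Polynomial (Polynomial K))))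
      (C (C X) + X * C (C X) ^ 2 : Polynomial (Polynomial (Polynomial K))))
    (C X + X * C X ^ 2 : Polynomial (Polynomial (Polynomial K)))

@[simp] lemma Xi_X : Xi K X = C X + X * C X ^ 2 := by
  simp [Xi]

@[simp] lemma Xi_CX : Xi K (C X) = C (C X) + X * C (C X) ^ 2 := by
  simp [Xi]

@[simp] lemma Xi_CC (a : K) : Xi K (C (C a)) = C (C (C a)) := by
  simp [Xi]

/-- the substitution `u ↦ u + c u², v ↦ v + c v²` as evaluation of `Xi`. -/
def tau (c : K) : Polynomial (Polynomial K) →+* Polynomial (Polynomial K) :=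
  (Polynomial.evalRingHom (C (C c) : Polynomial (Polynomial K))).comp (Xi K)

@[simp] lemma tau_X (c : K) : tau K c X = X + C (C c) * X ^ 2 := by
  simp [tau]

@[simp] lemma tau_CX (c : K) : tau K c (C X) = C X + C (C c) * C X ^ 2 := by
  simp [tau]

@[simp] lemma tau_CC (c a : K) : tau K c (C (C a)) = C (C a) := by
  simp [tau]

variable {K}

lemma eps_subst (y : R) (c : K) :
    eps K (y + c • (y * y)) = (eps K y).comp (tau K c) := by
  apply Polynomial.ringHom_ext
  · intro p
    have : ((eps K (y + c • (y * y))).comp (Polynomial.C)) p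
        = (((eps K y).comp (tau K c)).comp (Polynomial.C)) p := by
      refine congrFun (congrArg _ ?_) p
      apply Polynomial.ringHom_ext
      · intro a
        simp only [RingHom.comp_apply, RingHom.coe_comp, Function.comp_apply]
        rw [tau_CC]
        simp
      · simp only [RingHom.comp_apply, RingHom.coe_comp, Function.comp_apply]
        rw [tau_CX]
        simp only [map_add, map_mul, map_pow, eps_CX, eps_CC]
        apply LinearMap.ext
        intro r
        simp only [LinearMap.add_apply, LinearMap.mulRight_apply, Module.End.mul_apply,
          Module.algebraMap_end_apply, pow_two, LinearMap.smul_apply]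
        rw [mul_add, mul_smul_comm, mul_assoc]
    simpa using this
  · simp only [RingHom.comp_apply, tau_X, eps_X]
    simp only [map_add, map_mul, map_pow, eps_X, eps_CC]
    apply LinearMap.ext
    intro r
    simp only [LinearMap.add_apply, LinearMap.mulLeft_apply, Module.End.mul_apply,
      Module.algebraMap_end_apply, pow_two, LinearMap.smul_apply]
    rw [add_mul, smul_mul_assoc, mul_assoc]

/-! ### Deconvolution and coefficient-evaluation lemmas -/

lemma deconv (y x : R) (W Ψ : Polynomial (Polynomial (Polynomial K))) (hW : W.coeff 0 = 1)
    (h : ∀ r, eps K y ((W * Ψ).coeff r) x = 0) : ∀ r, eps K y (Ψ.coeff r) x = 0 := by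
  intro r
  induction r using Nat.strong_induction_on with
  | _ r ih =>
    have hc : (W * Ψ).coeff r = ∑ p ∈ Finset.HasAntidiagonal.antidiagonal r, W.coeff p.1 * Ψ.coeff p.2 :=
      Polynomial.coeff_mul W Ψ r
    have h0 : ∀ p ∈ Finset.HasAntidiagonal.antidiagonal r, p ≠ ((0 : ℕ), r) →
        eps K y (W.coeff p.1 * Ψ.coeff p.2) x = 0 := by
      intro p hp hne
      have hp' : p.1 + p.2 = r := Finset.HasAntidiagonal.mem_antidiagonal.mp hp
      have h2 : p.2 < r := by
        rcases Nat.eq_zero_or_pos p.1 with h1 | h1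
        · exfalso; apply hne
          have : p.2 = r := by omega
          exact Prod.ext h1 this
        · omega
      rw [map_mul, Module.End.mul_apply, ih p.2 h2, map_zero]
    have hsum : ∑ p ∈ Finset.HasAntidiagonal.antidiagonal r, eps K y (W.coeff p.1 * Ψ.coeff p.2) x
        = eps K y ((W * Ψ).coeff r) x := by
      rw [hc, map_sum]
      exact (LinearMap.sum_apply _ _ _).symm
    rw [Finset.sum_eq_single_of_mem ((0:ℕ), r) (by simp) h0] at hsum
    rw [hW, one_mul] at hsum
    rw [hsum, h r]

lemma eval_vanish (y x : R) (Q : Polynomial (Polynomial (Polynomial K)))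
    (b₀ g : Polynomial (Polynomial K))
    (h : ∀ r, eps K y (g * Q.coeff r) x = 0) : eps K y (g * Q.eval b₀) x = 0 := by
  rw [Polynomial.eval_eq_sum_range, Finset.mul_sum, map_sum]
  rw [LinearMap.sum_apply]
  refine Finset.sum_eq_zero ?_
  intro r _
  have hr : g * (Q.coeff r * b₀ ^ r) = b₀ ^ r * (g * Q.coeff r) := by ring
  rw [hr, map_mul, Module.End.mul_apply, h r, map_zero]

lemma eps_eval_expand (y x : R) (P : Polynomial (Polynomial (Polynomial K))) (c : K) :
    eps K y (P.eval (C (C c))) x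
      = ∑ r ∈ Finset.range (P.natDegree + 1), c ^ r • (eps K y (P.coeff r) x) := by
  rw [Polynomial.eval_eq_sum_range, map_sum, LinearMap.sum_apply]
  refine Finset.sum_congr rfl ?_
  intro r _
  have e3 : ((C (C c) : Polynomial (Polynomial K))) ^ r = C (C (c ^ r)) := by
    rw [← C_pow, ← C_pow]
  rw [mul_comm (P.coeff r), e3, map_mul, eps_CC, Module.End.mul_apply,
    Module.algebraMap_end_apply]

/-! ### Computations for the specific polynomial `A` -/

variable (K)

lemma Xi_A (n : ℕ) (α : Fin (n + 1) → K) :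
    Xi K (∑ i : Fin (n + 1), C (C (α i)) * X ^ (i : ℕ) * (C X) ^ (n - (i : ℕ)))
      = ∑ i : Fin (n + 1), C (C (C (α i)) * X ^ (i : ℕ) * (C X) ^ (n - (i : ℕ)))
          * (1 + X * C X) ^ (i : ℕ) * (1 + X * C (C X)) ^ (n - (i : ℕ)) := by
  rw [map_sum]
  refine Finset.sum_congr rfl ?_
  intro i _
  rw [map_mul, map_mul, map_pow, map_pow, Xi_CC, Xi_X, Xi_CX]
  have e1 : (C X + X * C X ^ 2 : Polynomial (Polynomial (Polynomial K)))
      = C X * (1 + X * C X) := by ring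
  have e2 : (C (C X) + X * C (C X) ^ 2 : Polynomial (Polynomial (Polynomial K)))
      = C (C X) * (1 + X * C (C X)) := by ring
  rw [e1, e2,
    mul_pow (C (X : Polynomial (Polynomial K))) (1 + X * C (X : Polynomial (Polynomial K)))
      ((i : ℕ)),
    mul_pow (C (C (X : Polynomial K))) (1 + X * C (C (X : Polynomial K))) (n - (i : ℕ))]
  simp only [C_mul, C_pow]
  ring

lemma reflect_Xi_A (n : ℕ) (α : Fin (n + 1) → K) :
    reflect n (∑ i : Fin (n + 1), C (C (C (α i)) * X ^ (i : ℕ) * (C X) ^ (n - (i : ℕ)))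
          * (1 + X * C X) ^ (i : ℕ) * (1 + X * C (C X)) ^ (n - (i : ℕ)))
      = ∑ i : Fin (n + 1), C (C (C (α i)) * X ^ (i : ℕ) * (C X) ^ (n - (i : ℕ)))
          * (X + C X) ^ (i : ℕ) * (X + C (C X)) ^ (n - (i : ℕ)) := by
  rw [reflect_sum]
  refine Finset.sum_congr rfl ?_
  intro i _
  have hi : (i : ℕ) ≤ n := Nat.lt_succ_iff.mp i.isLt
  rw [mul_assoc, reflect_C_mul]
  have hm := reflect_mul ((1 + X * C (X : Polynomial (Polynomial K))) ^ (i : ℕ))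
      ((1 + X * C (C (X : Polynomial K))) ^ (n - (i : ℕ)))
      (natDegree_one_add_X_mul_C_pow _ _) (natDegree_one_add_X_mul_C_pow _ _)
  rw [Nat.add_sub_cancel' hi] at hm
  rw [hm, reflect_one_add_X_mul_C_pow, reflect_one_add_X_mul_C_pow, ← mul_assoc]

lemma eval_reflect_A (n : ℕ) (α : Fin (n + 1) → K) :
    Polynomial.eval (-(X : Polynomial (Polynomial K)))
        (∑ i : Fin (n + 1), C (C (C (α i)) * X ^ (i : ℕ) * (C X) ^ (n - (i : ℕ)))
          * (X + C X) ^ (i : ℕ) * (X + C (C X)) ^ (n - (i : ℕ)))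
      = C (C (α 0)) * (C X) ^ n * (C X - X) ^ n := by
  rw [Polynomial.eval_finset_sum]
  rw [Finset.sum_eq_single (0 : Fin (n + 1))]
  · simp only [eval_mul, eval_pow, eval_add, eval_X, eval_C]
    have h0 : ((0 : Fin (n + 1)) : ℕ) = 0 := rfl
    rw [h0]
    have hz : (-X + X : Polynomial (Polynomial K)) = 0 := neg_add_cancel X
    rw [hz]
    have hs : (-X + C X : Polynomial (Polynomial K)) = C X - X := by ring
    rw [hs]
    simp
  · intro i _ hi
    have hv : (i : ℕ) ≠ 0 := by
      intro hz
      exact hi (Fin.ext (by simp [hz]))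
    simp only [eval_mul, eval_pow, eval_add, eval_X, eval_C]
    have hz : (-X + X : Polynomial (Polynomial K)) = 0 := neg_add_cancel X
    rw [hz, zero_pow hv, mul_zero, zero_mul]
  · intro habs
    exact absurd (Finset.mem_univ _) habs

lemma XiH_factor (m k n : ℕ) (α : Fin (n + 1) → K) :
    Xi K (X ^ m * (C X) ^ k
        * ∑ i : Fin (n + 1), C (C (α i)) * X ^ (i : ℕ) * (C X) ^ (n - (i : ℕ)))
      = ((1 + X * C X) ^ m * (1 + X * C (C X)) ^ k)
        * (C (X ^ m * (C X) ^ k)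
            * Xi K (∑ i : Fin (n + 1), C (C (α i)) * X ^ (i : ℕ) * (C X) ^ (n - (i : ℕ)))) := by
  rw [map_mul, map_mul, map_pow, map_pow, Xi_X, Xi_CX]
  have e1 : (C X + X * C X ^ 2 : Polynomial (Polynomial (Polynomial K)))
      = C X * (1 + X * C X) := by ring
  have e2 : (C (C X) + X * C (C X) ^ 2 : Polynomial (Polynomial (Polynomial K)))
      = C (C X) * (1 + X * C (C X)) := by ring
  rw [e1, e2,
    mul_pow (C (X : Polynomial (Polynomial K))) (1 + X * C (X : Polynomial (Polynomial K))) m,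
    mul_pow (C (C (X : Polynomial K))) (1 + X * C (C (X : Polynomial K))) k]
  simp only [C_mul, C_pow]
  ring

variable {K}

lemma eps_H_eq (m k n : ℕ) (α : Fin (n + 1) → K) (x y : R) :
    eps K y (X ^ m * (C X) ^ k
        * ∑ i : Fin (n + 1), C (C (α i)) * X ^ (i : ℕ) * (C X) ^ (n - (i : ℕ))) x
      = sandwich y m (∑ i : Fin (n + 1), α i • sandwich y (i : ℕ) x (n - (i : ℕ))) k := by
  rw [map_mul, map_mul, map_pow, map_pow, eps_X, eps_CX, Module.End.mul_apply,
    Module.End.mul_apply, sandwich_eq K y m k]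
  congr 1
  congr 1
  rw [map_sum, LinearMap.sum_apply]
  refine Finset.sum_congr rfl ?_
  intro i _
  rw [map_mul, map_mul, map_pow, map_pow, eps_CC, eps_X, eps_CX, sandwich_eq K]
  simp [Module.End.mul_apply, Module.algebraMap_end_apply]

/-! ### Main lemma -/

theorem main (K R : Type*) [CommRing K] [IsDomain K]
    [Infinite K] [NonUnitalRing R] [Module K R] [IsScalarTower K R R] [SMulCommClass K R R]
    (htf : ∀ (k : K) (r : R), k ≠ 0 → k • r = 0 → r = 0)
    (m k n : ℕ) (α : Fin (n + 1) → K) (hα : α 0 ≠ 0)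
    (h : ∀ x y : R,
      sandwich y m (∑ i : Fin (n + 1), α i • sandwich y (i : ℕ) x (n - (i : ℕ))) k = 0) :
    ∀ x y : R, sandwich y m (engel x y n) (n + k) = 0 := by
  intro x y
  have hHy : ∀ y' : R,
      eps K y' (X ^ m * (C X) ^ k
        * ∑ i : Fin (n + 1), C (C (α i)) * X ^ (i : ℕ) * (C X) ^ (n - (i : ℕ))) x = 0 := by
    intro y'
    rw [eps_H_eq]
    exact h x y'
  set H : Polynomial (Polynomial K) :=
    X ^ m * (C X) ^ k * ∑ i : Fin (n + 1), C (C (α i)) * X ^ (i : ℕ) * (C X) ^ (n - (i : ℕ))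
    with hHdef
  have hEv : ∀ c : K, eps K y ((Xi K H).eval (C (C c))) x = 0 := by
    intro c
    have h1 := hHy (y + c • (y * y))
    rw [eps_subst y c] at h1
    simpa [tau, RingHom.comp_apply, Polynomial.coe_evalRingHom] using h1
  have hCoeff : ∀ r, eps K y ((Xi K H).coeff r) x = 0 := by
    have hvd : ∀ c : K, ∑ r ∈ Finset.range ((Xi K H).natDegree + 1),
        c ^ r • (eps K y ((Xi K H).coeff r) x) = 0 := by
      intro c
      rw [← eps_eval_expand y x (Xi K H) c]
      exact hEv c
    have hlow := vandermonde_zero K htf ((Xi K H).natDegree + 1)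
      (fun r => eps K y ((Xi K H).coeff r) x) hvd
    intro r
    by_cases hr : r < (Xi K H).natDegree + 1
    · exact hlow r hr
    · rw [Polynomial.coeff_eq_zero_of_natDegree_lt (by omega), map_zero]
      exact LinearMap.zero_apply x
  have hPsi : ∀ r, eps K y ((C (X ^ m * (C X) ^ k)
      * Xi K (∑ i : Fin (n + 1), C (C (α i)) * X ^ (i : ℕ) * (C X) ^ (n - (i : ℕ)))).coeff r)
      x = 0 := by
    refine deconv y x ((1 + X * C X) ^ m * (1 + X * C (C X)) ^ k) _ ?_ ?_
    · rw [Polynomial.coeff_zero_eq_eval_zero]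
      simp
    · intro r
      rw [← XiH_factor K m k n α]
      exact hCoeff r
  have hQc : ∀ r, eps K y ((X ^ m * (C X) ^ k)
      * (reflect n (Xi K (∑ i : Fin (n + 1),
          C (C (α i)) * X ^ (i : ℕ) * (C X) ^ (n - (i : ℕ))))).coeff r) x = 0 := by
    intro r
    rw [Polynomial.coeff_reflect]
    have h4 := hPsi (revAt n r)
    rwa [Polynomial.coeff_C_mul] at h4
  have hEval := eval_vanish y x _ (-(X : Polynomial (Polynomial K))) _ hQc
  have hcomp : Polynomial.eval (-(X : Polynomial (Polynomial K)))
      (reflect n (Xi K (∑ i : Fin (n + 1),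
        C (C (α i)) * X ^ (i : ℕ) * (C X) ^ (n - (i : ℕ)))))
      = C (C (α 0)) * (C X) ^ n * (C X - X) ^ n := by
    rw [Xi_A, reflect_Xi_A, eval_reflect_A]
  rw [hcomp] at hEval
  have hrearr : (X ^ m * (C X) ^ k) * (C (C (α 0)) * (C X) ^ n * (C X - X) ^ n)
      = C (C (α 0)) * (X ^ m * ((C X) ^ (n + k) * ((C X : Polynomial (Polynomial K)) - X) ^ n))
      := by
    rw [pow_add]; ring
  rw [hrearr, map_mul, eps_CC, Module.End.mul_apply, Module.algebraMap_end_apply] at hEval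
  have hz := htf (α 0) _ hα hEval
  rw [sandwich_eq K, engel_eq K]
  rw [map_mul, map_mul, map_pow, map_pow, map_pow, map_sub, eps_X, eps_CX,
    Module.End.mul_apply, Module.End.mul_apply] at hz
  exact hz

end
end EngelProofAux

/-- Lemma (ii): let `R` be an algebra over an infinite commutative domain `K` with
torsion-free action.  If `R` satisfies the identity `y^m α(x,y) y^k = 0`, where
`α(x,y) = ∑_{i=0}^n αᵢ yⁱ x y^{n-i}` is left reduced (`α₀ ≠ 0`), then `R` satisfies
the identity `y^m e_n(x,y) y^{n+k} = 0`. -/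
theorem engel_of_left_reduced_partial_linear (K R : Type*) [CommRing K] [IsDomain K]
    [Infinite K] [NonUnitalRing R] [Module K R] [IsScalarTower K R R] [SMulCommClass K R R]
    (htf : ∀ (k : K) (r : R), k ≠ 0 → k • r = 0 → r = 0)
    (m k n : ℕ) (α : Fin (n + 1) → K) (hα : α 0 ≠ 0)
    (h : ∀ x y : R,
      sandwich y m (∑ i : Fin (n + 1), α i • sandwich y (i : ℕ) x (n - (i : ℕ))) k = 0) :
    ∀ x y : R, sandwich y m (engel x y n) (n + k) = 0 := by
  exact EngelProofAux.main K R htf m k n α hα h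
end

section
/- Let K be an infinite commutative domain and R an associative K-algebra with torsion-free K-action. Suppose R satisfies the identity y^m α(x,y) y^k = 0 for all x, y ∈ R, where α(x,y) = Σ_{i=0}^n α_i yⁱ x y^{n−i} with α_i ∈ K, α₀ ≠ 0 and α_n ≠ 0 (reduced). Then R satisfies the identity y^m e_{3n−1}(x,y) y^k = 0 for all x, y ∈ R. -/
namespace EngelAux

open Polynomial

variable {K R : Type*} [CommRing K]
  [NonUnitalRing R] [Module K R] [IsScalarTower K R R] [SMulCommClass K R R]

abbrev B (K : Type*) [CommRing K] := Polynomial (Polynomial K)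

noncomputable def PS : B K := Polynomial.X
noncomputable def PT : B K := Polynomial.C Polynomial.X

noncomputable def psiInner (y : R) : Polynomial K →+* Module.End K R :=
  Polynomial.eval₂RingHom' (algebraMap K (Module.End K R)) (LinearMap.mulRight K y)
    (fun a => Algebra.commutes a _)

lemma psiInner_comm (y : R) (p : Polynomial K) :
    Commute (psiInner y p) (LinearMap.mulLeft K y) := by
  induction p using Polynomial.induction_on' with
  | add f g hf hg => simpa [map_add] using hf.add_left hg
  | monomial i a =>
      have : (psiInner y) (Polynomial.monomial i a) =
          algebraMap K (Module.End K R) a * (LinearMap.mulRight K y) ^ i := by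
        rw [show (Polynomial.monomial i a : Polynomial K) = Polynomial.C a * Polynomial.X ^ i by
          rw [Polynomial.C_mul_X_pow_eq_monomial], map_mul, map_pow]
        simp [psiInner]
        exact congrArg₂ (· * ·) (Polynomial.eval₂_C _ _) (congrArg (· ^ i) (Polynomial.eval₂_X _ _))
      rw [this]
      exact Commute.mul_left (Algebra.commutes a _)
        (((LinearMap.commute_mulLeft_right y y).symm).pow_left i)

noncomputable def psi (y : R) : B K →+* Module.End K R :=
  Polynomial.eval₂RingHom' (psiInner y) (LinearMap.mulLeft K y) (psiInner_comm y)

@[simp] lemma psi_PS (y : R) : psi y (PS : B K) = LinearMap.mulLeft K y := by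
  simp [psi, PS]

@[simp] lemma psi_PT (y : R) : psi y (PT : B K) = LinearMap.mulRight K y := by
  simp [psi, PT, psiInner]
  exact Polynomial.eval₂_X _ _

@[simp] lemma psi_CC (y : R) (c : K) :
    psi y (Polynomial.C (Polynomial.C c) : B K) = algebraMap K (Module.End K R) c := by
  simp [psi, psiInner]
  exact Polynomial.eval₂_C _ _

lemma sandwich_eq_psi (y : R) (a b : ℕ) (w : R) :
    sandwich y a w b = psi y ((PS : B K) ^ a * PT ^ b) w := by
  rw [map_mul, map_pow, map_pow, psi_PS, psi_PT]
  show sandwich y a w b =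
    ((LinearMap.mulLeft K y) ^ a) (((LinearMap.mulRight K y) ^ b) w)
  rw [Module.End.pow_apply, Module.End.pow_apply]
  rfl


noncomputable def embedB (K : Type*) [CommRing K] : K →+* Polynomial (B K) :=
  (Polynomial.C : B K →+* Polynomial (B K)).comp
    ((Polynomial.C : Polynomial K →+* B K).comp (Polynomial.C : K →+* Polynomial K))

noncomputable def innerSub (K : Type*) [CommRing K] : Polynomial K →+* Polynomial (B K) :=
  Polynomial.eval₂RingHom (embedB K)
    (Polynomial.C PT * (1 + Polynomial.X * Polynomial.C PT))

noncomputable def bigSubst (K : Type*) [CommRing K] : B K →+* Polynomial (B K) :=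
  Polynomial.eval₂RingHom (innerSub K)
    (Polynomial.C PS * (1 + Polynomial.X * Polynomial.C PS))

@[simp] lemma bigSubst_PS : bigSubst K (PS : B K) =
    Polynomial.C PS * (1 + Polynomial.X * Polynomial.C PS) := by
  simp [bigSubst, PS]

@[simp] lemma bigSubst_PT : bigSubst K (PT : B K) =
    Polynomial.C PT * (1 + Polynomial.X * Polynomial.C PT) := by
  simp [bigSubst, PT, innerSub]

@[simp] lemma bigSubst_CC (c : K) : bigSubst K (Polynomial.C (Polynomial.C c) : B K) =
    Polynomial.C (Polynomial.C (Polynomial.C c)) := by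
  simp [bigSubst, innerSub, embedB]

lemma psi_subst (y : R) (c : K) (g : B K) :
    psi (y + c • (y * y)) g =
      psi y (Polynomial.eval (algebraMap K (B K) c) (bigSubst K g)) := by
  have hL : LinearMap.mulLeft K (y + c • (y * y)) =
      LinearMap.mulLeft K y + c • (LinearMap.mulLeft K y * LinearMap.mulLeft K y) := by
    ext w
    simp [LinearMap.mulLeft_apply, add_mul, smul_mul_assoc, mul_assoc, Module.End.mul_apply]
  have hR : LinearMap.mulRight K (y + c • (y * y)) =
      LinearMap.mulRight K y + c • (LinearMap.mulRight K y * LinearMap.mulRight K y) := by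
    ext w
    simp [LinearMap.mulRight_apply, mul_add, mul_smul_comm, mul_assoc, Module.End.mul_apply]
  have key : (psi (y + c • (y * y)) : B K →+* Module.End K R) =
      ((psi y : B K →+* Module.End K R).comp
        (((Polynomial.evalRingHom (algebraMap K (B K) c)).comp (bigSubst K)))) := by
    apply Polynomial.ringHom_ext'
    · apply Polynomial.ringHom_ext'
      · refine RingHom.ext fun a => ?_
        simp only [RingHom.comp_apply, Polynomial.coe_evalRingHom]
        show psi (y + c • (y * y)) (Polynomial.C (Polynomial.C a)) =
          psi y (Polynomial.eval (algebraMap K (B K) c)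
            (bigSubst K (Polynomial.C (Polynomial.C a))))
        simp
      · show psi (y + c • (y * y)) (PT : B K) =
          psi y (Polynomial.eval (algebraMap K (B K) c) (bigSubst K (PT : B K)))
        rw [bigSubst_PT, psi_PT, hR]
        rw [Polynomial.eval_mul, Polynomial.eval_C, Polynomial.eval_add,
          Polynomial.eval_one, Polynomial.eval_mul, Polynomial.eval_X, Polynomial.eval_C]
        rw [map_mul, map_add, map_one, map_mul, psi_PT]
        have : (psi y : B K →+* Module.End K R) (algebraMap K (B K) c) =
            algebraMap K (Module.End K R) c := by
          simpa using psi_CC (K := K) y c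
        rw [this]
        rw [mul_add, mul_one]
        congr 1
        rw [Algebra.smul_def, Algebra.commutes c (LinearMap.mulRight K y * LinearMap.mulRight K y), mul_assoc,
          Algebra.commutes c (LinearMap.mulRight K y)]
    · show psi (y + c • (y * y)) (PS : B K) =
        psi y (Polynomial.eval (algebraMap K (B K) c) (bigSubst K (PS : B K)))
      rw [bigSubst_PS, psi_PS, hL]
      rw [Polynomial.eval_mul, Polynomial.eval_C, Polynomial.eval_add,
        Polynomial.eval_one, Polynomial.eval_mul, Polynomial.eval_X, Polynomial.eval_C]
      rw [map_mul, map_add, map_one, map_mul, psi_PS]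
      have : (psi y : B K →+* Module.End K R) (algebraMap K (B K) c) =
          algebraMap K (Module.End K R) c := by
        simpa using psi_CC (K := K) y c
      rw [this]
      rw [mul_add, mul_one]
      congr 1
      rw [Algebra.smul_def, Algebra.commutes c (LinearMap.mulLeft K y * LinearMap.mulLeft K y), mul_assoc,
        Algebra.commutes c (LinearMap.mulLeft K y)]
  exact congrFun (congrArg (fun (f : B K →+* Module.End K R) => (f : B K → Module.End K R)) key) g


open Finset in
theorem vandermonde_extract {M : Type*} [AddCommGroup M] [Module K M] [IsDomain K] [Infinite K]
    (htf : ∀ (c : K) (v : M), c ≠ 0 → c • v = 0 → v = 0)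
    (N : ℕ) (v : ℕ → M) (h : ∀ c : K, ∑ j ∈ Finset.range N, c ^ j • v j = 0) :
    ∀ j, j < N → v j = 0 := by

  intro j hj
  set e : Fin N → K := fun i => (Infinite.natEmbedding K) i with he
  have einj : Function.Injective e := fun a b hab => by
    have := (Infinite.natEmbedding K).injective hab
    exact Fin.ext (by exact_mod_cast this)
  set V : Matrix (Fin N) (Fin N) K := Matrix.vandermonde e with hV
  have hdet : V.det ≠ 0 := by
    rw [hV, Matrix.det_vandermonde]
    refine Finset.prod_ne_zero_iff.2 fun i _ => Finset.prod_ne_zero_iff.2 fun l hl => ?_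
    exact sub_ne_zero.2 fun hc => by
      have := einj hc
      exact absurd this (by exact fun hh => absurd (hh ▸ (Finset.mem_Ioi.1 hl)) (lt_irrefl _))
  have hrow : ∀ i : Fin N, ∑ l : Fin N, V i l • v ↑l = 0 := by
    intro i
    have := h (e i)
    rw [Finset.sum_range] at this
    simpa [hV, Matrix.vandermonde] using this
  have key : V.det • v j = 0 := by
    have hz : ∑ i : Fin N, (V.adjugate ⟨j, hj⟩ i) • (∑ l : Fin N, V i l • v ↑l) = 0 := by
      simp [hrow]
    calc V.det • v ((⟨j, hj⟩ : Fin N) : ℕ)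
        = ∑ l : Fin N, ((V.det • (1 : Matrix (Fin N) (Fin N) K)) ⟨j, hj⟩ l) • v ↑l := by
          rw [Finset.sum_eq_single (⟨j, hj⟩ : Fin N)]
          · simp
          · intro b _ hb; simp [Matrix.one_apply, Ne.symm hb]
          · intro hb; exact absurd (Finset.mem_univ _) hb
      _ = ∑ l : Fin N, ((V.adjugate * V) ⟨j, hj⟩ l) • v ↑l := by rw [Matrix.adjugate_mul]
      _ = ∑ l : Fin N, ∑ i : Fin N, (V.adjugate ⟨j, hj⟩ i * V i l) • v ↑l := by
          simp [Matrix.mul_apply, Finset.sum_smul]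
      _ = ∑ i : Fin N, (V.adjugate ⟨j, hj⟩ i) • (∑ l : Fin N, V i l • v ↑l) := by
          rw [Finset.sum_comm]
          simp [Finset.smul_sum, mul_smul]
      _ = 0 := hz
  exact htf _ _ hdet key


noncomputable def Fpoly (m k n : ℕ) (α : Fin (n+1) → K) : B K :=
  ∑ i : Fin (n+1),
    Polynomial.C (Polynomial.C (α i)) * PS ^ (m + (i : ℕ)) * PT ^ ((n - (i : ℕ)) + k)

lemma psi_smul (y : R) (a : K) (g : B K) : psi y (a • g) = a • psi y g := by
  have halg : algebraMap K (B K) a = Polynomial.C (Polynomial.C a) := by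
    simp [Polynomial.algebraMap_apply]
  rw [Algebra.smul_def, map_mul, halg, psi_CC, ← Algebra.smul_def]

lemma psi_Fpoly (m k n : ℕ) (α : Fin (n+1) → K) (x y : R) :
    psi y (Fpoly m k n α) x
      = sandwich y m (∑ i : Fin (n + 1), α i • sandwich y (i : ℕ) x (n - (i : ℕ))) k := by
  rw [sandwich_eq_psi (K := K), map_sum, Fpoly, map_sum, LinearMap.sum_apply]
  refine Finset.sum_congr rfl fun i _ => ?_
  rw [map_smul, sandwich_eq_psi (K := K), ← Module.End.mul_apply, ← map_mul]
  have h2 : (PS : B K) ^ m * PT ^ k * (PS ^ (i : ℕ) * PT ^ (n - (i : ℕ)))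
      = PS ^ (m + (i : ℕ)) * PT ^ ((n - (i : ℕ)) + k) := by ring
  have h3 : Polynomial.C (Polynomial.C (α i)) * PS ^ (m + (i : ℕ)) * PT ^ ((n - (i : ℕ)) + k)
      = α i • ((PS : B K) ^ (m + (i : ℕ)) * PT ^ ((n - (i : ℕ)) + k)) := by
    have halg : algebraMap K (B K) (α i) = Polynomial.C (Polynomial.C (α i)) := by
      simp [Polynomial.algebraMap_apply]
    rw [Algebra.smul_def, halg, mul_assoc]
  rw [h2, h3, psi_smul, LinearMap.smul_apply]

lemma psi_Fhat_coeff [IsDomain K] [Infinite K]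
    (htf : ∀ (c : K) (r : R), c ≠ 0 → c • r = 0 → r = 0)
    (m k n : ℕ) (α : Fin (n+1) → K)
    (h : ∀ x y : R,
      sandwich y m (∑ i : Fin (n + 1), α i • sandwich y (i : ℕ) x (n - (i : ℕ))) k = 0)
    (y : R) (j : ℕ) :
    psi (R := R) y ((bigSubst K (Fpoly m k n α)).coeff j) = 0 := by
  set Fh := bigSubst K (Fpoly m k n α) with hFh
  have htfE : ∀ (c : K) (f : Module.End K R), c ≠ 0 → c • f = 0 → f = 0 := by
    intro c f hc hf
    ext w
    refine htf c (f w) hc ?_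
    rw [← LinearMap.smul_apply, hf, LinearMap.zero_apply]
  have hall : ∀ c : K,
      ∑ jj ∈ Finset.range (Fh.natDegree + 1), c ^ jj • psi (R := R) y (Fh.coeff jj) = 0 := by
    intro c
    have h0 : psi (y + c • (y * y)) (Fpoly m k n α) = (0 : Module.End K R) := by
      apply LinearMap.ext
      intro x
      rw [LinearMap.zero_apply, psi_Fpoly]
      exact h x _
    have h1 : psi y (Polynomial.eval (algebraMap K (B K) c) Fh) = (0 : Module.End K R) := by
      rw [← psi_subst]
      exact h0
    rw [Polynomial.eval_eq_sum_range, map_sum] at h1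
    rw [← h1]
    refine Finset.sum_congr rfl fun jj _ => ?_
    rw [map_mul, map_pow]
    have hac : psi (R := R) y (algebraMap K (B K) c) = algebraMap K (Module.End K R) c := by
      simp [Polynomial.algebraMap_apply]
    rw [hac, ← map_pow, ← Algebra.commutes, ← Algebra.smul_def]
  by_cases hj : j < Fh.natDegree + 1
  · exact vandermonde_extract htfE _ (fun jj => psi y (Fh.coeff jj)) hall j hj
  · rw [Polynomial.coeff_eq_zero_of_natDegree_lt (by omega), map_zero]

noncomputable def uu (K : Type*) [CommRing K] : Polynomial (B K) :=
  1 + Polynomial.X * Polynomial.C PS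

noncomputable def vv (K : Type*) [CommRing K] : Polynomial (B K) :=
  1 + Polynomial.X * Polynomial.C PT

lemma uu_def : uu K = 1 + Polynomial.X * Polynomial.C PS := rfl

lemma vv_def : vv K = 1 + Polynomial.X * Polynomial.C PT := rfl

noncomputable def qhat (n : ℕ) (α : Fin (n+1) → K) : Polynomial (B K) :=
  ∑ i : Fin (n+1),
    Polynomial.C (Polynomial.C (Polynomial.C (α i)) * PS ^ (i : ℕ) * PT ^ (n - (i : ℕ))) *
      uu K ^ (i : ℕ) * vv K ^ (n - (i : ℕ))

lemma Fhat_factor (m k n : ℕ) (α : Fin (n+1) → K) :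
    bigSubst K (Fpoly m k n α) =
      Polynomial.C ((PS : B K) ^ m * PT ^ k) * (uu K ^ m * vv K ^ k * qhat n α) := by
  rw [Fpoly, map_sum, qhat, Finset.mul_sum, Finset.mul_sum]
  refine Finset.sum_congr rfl fun i _ => ?_
  simp only [map_mul, map_pow, bigSubst_PS, bigSubst_PT, bigSubst_CC, ← uu_def, ← vv_def]
  ring

lemma one_add_X_pow_mul (N z : ℕ) (a : Polynomial (B K)) :
    ∃ d, (1 + Polynomial.X ^ N * a) ^ z = 1 + Polynomial.X ^ N * d := by
  induction z with
  | zero => exact ⟨0, by simp⟩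
  | succ z ih =>
      obtain ⟨d, hd⟩ := ih
      refine ⟨d + a + Polynomial.X ^ N * (a * d), ?_⟩
      rw [pow_succ, hd]
      ring

lemma strip_coeff [IsDomain K] [Infinite K]
    (htf : ∀ (c : K) (r : R), c ≠ 0 → c • r = 0 → r = 0)
    (m k n : ℕ) (α : Fin (n+1) → K)
    (h : ∀ x y : R,
      sandwich y m (∑ i : Fin (n + 1), α i • sandwich y (i : ℕ) x (n - (i : ℕ))) k = 0)
    (y : R) (j : ℕ) (hj : j ≤ n) :
    psi (R := R) y ((PS : B K) ^ m * PT ^ k * (qhat n α).coeff j) = 0 := by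
  -- truncated geometric inverses
  have geo : ∀ b : B K, ∃ d : Polynomial (B K),
      (∑ e ∈ Finset.range (n+1), (-(Polynomial.X * Polynomial.C b)) ^ e) *
        (1 + Polynomial.X * Polynomial.C b) = 1 + Polynomial.X ^ (n+1) * d := by
    intro b
    refine ⟨-((-(Polynomial.C b)) ^ (n+1)), ?_⟩
    have hg := geom_sum_mul (-(Polynomial.X * Polynomial.C b)) (n+1)
    have h2 : (∑ e ∈ Finset.range (n+1), (-(Polynomial.X * Polynomial.C b)) ^ e) *
        (1 + Polynomial.X * Polynomial.C b)
        = -((∑ e ∈ Finset.range (n+1), (-(Polynomial.X * Polynomial.C b)) ^ e) *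
            ((-(Polynomial.X * Polynomial.C b)) - 1)) := by ring
    rw [h2, hg]
    have h3 : (-(Polynomial.X * Polynomial.C b)) ^ (n+1)
        = Polynomial.X ^ (n+1) * (-(Polynomial.C b)) ^ (n+1) := by
      ring
    rw [h3]
    ring
  obtain ⟨d₁, hd₁⟩ := geo PS
  obtain ⟨d₂, hd₂⟩ := geo PT
  set w₁ : Polynomial (B K) :=
    ∑ e ∈ Finset.range (n+1), (-(Polynomial.X * Polynomial.C (PS : B K))) ^ e with hw₁
  set w₂ : Polynomial (B K) :=
    ∑ e ∈ Finset.range (n+1), (-(Polynomial.X * Polynomial.C (PT : B K))) ^ e with hw₂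
  obtain ⟨e₁, he₁⟩ := one_add_X_pow_mul (K := K) (n+1) m d₁
  obtain ⟨e₂, he₂⟩ := one_add_X_pow_mul (K := K) (n+1) k d₂
  have key : uu K ^ m * vv K ^ k * qhat n α * (w₁ ^ m * w₂ ^ k)
      = qhat n α + Polynomial.X ^ (n+1) *
        (qhat n α * (e₁ + e₂ + Polynomial.X ^ (n+1) * (e₁ * e₂))) := by
    have : uu K ^ m * vv K ^ k * qhat n α * (w₁ ^ m * w₂ ^ k)
        = qhat n α * ((w₁ * uu K) ^ m * ((w₂ * vv K) ^ k)) := by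
      ring
    rw [this]
    simp only [uu_def, vv_def]
    rw [hd₁, hd₂, he₁, he₂]
    ring
  have key2 : Polynomial.C ((PS : B K) ^ m * PT ^ k) * (uu K ^ m * vv K ^ k * qhat n α) *
      (w₁ ^ m * w₂ ^ k)
      = Polynomial.C ((PS : B K) ^ m * PT ^ k) * qhat n α +
        (Polynomial.C ((PS : B K) ^ m * PT ^ k) *
          (qhat n α * (e₁ + e₂ + Polynomial.X ^ (n+1) * (e₁ * e₂)))) * Polynomial.X ^ (n+1) := by
    rw [mul_assoc, key]
    ring
  have h1 : (bigSubst K (Fpoly m k n α) * (w₁ ^ m * w₂ ^ k)).coeff j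
      = (PS : B K) ^ m * PT ^ k * (qhat n α).coeff j := by
    rw [Fhat_factor, key2, Polynomial.coeff_add, Polynomial.coeff_C_mul,
      Polynomial.coeff_mul_X_pow', if_neg (by omega), add_zero]
  rw [← h1, Polynomial.coeff_mul, map_sum]
  refine Finset.sum_eq_zero fun ab _ => ?_
  rw [map_mul, psi_Fhat_coeff htf m k n α h y ab.1, zero_mul]

lemma reflect_one_add (a : B K) :
    Polynomial.reflect 1 (1 + Polynomial.X * Polynomial.C a) = Polynomial.X + Polynomial.C a := by
  rw [show (1 + Polynomial.X * Polynomial.C a : Polynomial (B K))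
      = 1 + Polynomial.C a * Polynomial.X ^ 1 by ring]
  rw [Polynomial.reflect_add, Polynomial.reflect_one, Polynomial.reflect_C_mul_X_pow]
  rw [Polynomial.revAt_le (le_refl 1)]
  simp

lemma natDegree_one_add (a : B K) :
    (1 + Polynomial.X * Polynomial.C a : Polynomial (B K)).natDegree ≤ 1 := by
  refine le_trans (Polynomial.natDegree_add_le _ _) ?_
  simp only [Polynomial.natDegree_one]
  refine max_le (by norm_num) (le_trans (Polynomial.natDegree_mul_le) ?_)
  simpa [Polynomial.natDegree_C] using Polynomial.natDegree_X_le (R := B K)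

lemma reflect_pow_one_add (a : B K) (i : ℕ) :
    Polynomial.reflect i ((1 + Polynomial.X * Polynomial.C a) ^ i)
      = (Polynomial.X + Polynomial.C a) ^ i := by
  induction i with
  | zero => simp [Polynomial.reflect_one]
  | succ i ih =>
      rw [pow_succ, show i + 1 = i + 1 from rfl]
      have := Polynomial.reflect_mul ((1 + Polynomial.X * Polynomial.C a) ^ i)
        (1 + Polynomial.X * Polynomial.C a)
        (F := i) (G := 1)
        (le_trans (Polynomial.natDegree_pow_le) (by
          simpa using Nat.mul_le_mul_left i (natDegree_one_add a)))
        (natDegree_one_add a)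
      rw [this, ih, reflect_one_add, pow_succ]

lemma natDegree_pow_one_add (a : B K) (i : ℕ) :
    ((1 + Polynomial.X * Polynomial.C a : Polynomial (B K)) ^ i).natDegree ≤ i :=
  le_trans (Polynomial.natDegree_pow_le)
    (by simpa using Nat.mul_le_mul_left i (natDegree_one_add a))

lemma reflect_sum {ι : Type*} (s : Finset ι) (N : ℕ) (f : ι → Polynomial (B K)) :
    Polynomial.reflect N (∑ i ∈ s, f i) = ∑ i ∈ s, Polynomial.reflect N (f i) := by
  classical
  induction s using Finset.induction_on with
  | empty => simp [Polynomial.reflect_zero]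
  | insert _ _ hx ih => rw [Finset.sum_insert hx, Finset.sum_insert hx, Polynomial.reflect_add, ih]

lemma reflect_term (a b d : B K) {i N : ℕ} (hi : i ≤ N) :
    Polynomial.reflect N (Polynomial.C d *
        ((1 + Polynomial.X * Polynomial.C a) ^ i * (1 + Polynomial.X * Polynomial.C b) ^ (N-i)))
      = Polynomial.C d * ((Polynomial.X + Polynomial.C a) ^ i *
          (Polynomial.X + Polynomial.C b) ^ (N-i)) := by
  rw [Polynomial.reflect_C_mul]
  congr 1
  have h := Polynomial.reflect_mul ((1 + Polynomial.X * Polynomial.C a) ^ i)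
    ((1 + Polynomial.X * Polynomial.C b) ^ (N-i))
    (natDegree_pow_one_add a i) (natDegree_pow_one_add b (N-i))
  rw [Nat.add_sub_cancel' hi] at h
  rw [h, reflect_pow_one_add, reflect_pow_one_add]

lemma reflect_qhat (n : ℕ) (α : Fin (n+1) → K) :
    Polynomial.reflect n (qhat n α) =
      ∑ i : Fin (n+1),
        Polynomial.C (Polynomial.C (Polynomial.C (α i)) * PS ^ (i : ℕ) * PT ^ (n - (i : ℕ))) *
          ((Polynomial.X + Polynomial.C (PS : B K)) ^ (i : ℕ) *
            (Polynomial.X + Polynomial.C (PT : B K)) ^ (n - (i : ℕ))) := by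
  rw [qhat]
  rw [show (∑ i : Fin (n+1),
      Polynomial.C (Polynomial.C (Polynomial.C (α i)) * PS ^ (i : ℕ) * PT ^ (n - (i : ℕ))) *
        uu K ^ (i : ℕ) * vv K ^ (n - (i : ℕ)))
    = ∑ i : Fin (n+1),
      Polynomial.C (Polynomial.C (Polynomial.C (α i)) * PS ^ (i : ℕ) * PT ^ (n - (i : ℕ))) *
        (uu K ^ (i : ℕ) * vv K ^ (n - (i : ℕ))) from
    Finset.sum_congr rfl fun i _ => by ring]
  rw [reflect_sum]
  exact Finset.sum_congr rfl fun i _ => by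
    rw [uu_def, vv_def, reflect_term _ _ _ (Nat.lt_succ_iff.mp i.is_lt)]

lemma natDegree_reflect_qhat (n : ℕ) (α : Fin (n+1) → K) :
    (Polynomial.reflect n (qhat n α)).natDegree < n + 1 := by
  rw [reflect_qhat]
  refine Nat.lt_succ_of_le (Polynomial.natDegree_sum_le_of_forall_le _ _ fun i _ => ?_)
  refine le_trans (Polynomial.natDegree_mul_le) ?_
  rw [Polynomial.natDegree_C, zero_add]
  refine le_trans (Polynomial.natDegree_mul_le) ?_
  have h1 : (Polynomial.X + Polynomial.C (PS : B K)).natDegree ≤ 1 := by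
    refine le_trans (Polynomial.natDegree_add_le _ _) ?_
    simpa [Polynomial.natDegree_C] using Polynomial.natDegree_X_le (R := B K)
  have h2 : (Polynomial.X + Polynomial.C (PT : B K)).natDegree ≤ 1 := by
    refine le_trans (Polynomial.natDegree_add_le _ _) ?_
    simpa [Polynomial.natDegree_C] using Polynomial.natDegree_X_le (R := B K)
  have b1 := le_trans (Polynomial.natDegree_pow_le
    (p := Polynomial.X + Polynomial.C (PS : B K)) (n := (i : ℕ)))
    (Nat.mul_le_mul_left _ h1)
  have b2 := le_trans (Polynomial.natDegree_pow_le
    (p := Polynomial.X + Polynomial.C (PT : B K)) (n := n - (i : ℕ)))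
    (Nat.mul_le_mul_left _ h2)
  have hi : (i : ℕ) ≤ n := Nat.lt_succ_iff.mp i.is_lt
  omega

lemma psi_E1 [IsDomain K] [Infinite K]
    (htf : ∀ (c : K) (r : R), c ≠ 0 → c • r = 0 → r = 0)
    (m k n : ℕ) (α : Fin (n+1) → K) (hα₀ : α 0 ≠ 0)
    (h : ∀ x y : R,
      sandwich y m (∑ i : Fin (n + 1), α i • sandwich y (i : ℕ) x (n - (i : ℕ))) k = 0)
    (y : R) :
    psi (R := R) y ((PS : B K) ^ m * PT ^ (k + n) * (PT - PS) ^ n) = 0 := by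
  have htfE : ∀ (c : K) (f : Module.End K R), c ≠ 0 → c • f = 0 → f = 0 := by
    intro c f hc hf
    ext w
    refine htf c (f w) hc ?_
    rw [← LinearMap.smul_apply, hf, LinearMap.zero_apply]
  set qr := Polynomial.reflect n (qhat n α) with hqr
  have heval : Polynomial.eval (-(PS : B K)) qr
      = Polynomial.C (Polynomial.C (α 0)) * (PT ^ n * (PT - PS) ^ n) := by
    rw [hqr, reflect_qhat, Polynomial.eval_finset_sum]
    rw [Finset.sum_eq_single (0 : Fin (n+1))]
    · simp only [Fin.val_zero, pow_zero, Nat.sub_zero, mul_one, one_mul,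
        Polynomial.eval_mul, Polynomial.eval_pow, Polynomial.eval_add,
        Polynomial.eval_X, Polynomial.eval_C]
      rw [neg_add_eq_sub]
      ring
    · intro i _ hi
      have hi' : (i : ℕ) ≠ 0 := fun h0 => hi (Fin.ext (by simp [h0]))
      simp only [Polynomial.eval_mul, Polynomial.eval_pow, Polynomial.eval_add,
        Polynomial.eval_X, Polynomial.eval_C, neg_add_cancel, zero_pow hi', zero_mul, mul_zero]
    · intro hab
      exact absurd (Finset.mem_univ _) hab
  have key : psi (R := R) y ((PS : B K) ^ m * PT ^ k * Polynomial.eval (-(PS : B K)) qr) = 0 := by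
    rw [Polynomial.eval_eq_sum_range' (natDegree_reflect_qhat n α), Finset.mul_sum, map_sum]
    refine Finset.sum_eq_zero fun jj hjj => ?_
    have hjn : jj ≤ n := Nat.lt_succ_iff.mp (Finset.mem_range.mp hjj)
    have hc : (PS : B K) ^ m * PT ^ k * (qr.coeff jj * (-(PS : B K)) ^ jj)
        = ((PS : B K) ^ m * PT ^ k * (qhat n α).coeff (n - jj)) * (-(PS : B K)) ^ jj := by
      rw [hqr, Polynomial.coeff_reflect, Polynomial.revAt_le hjn]
      ring
    rw [hc, map_mul, strip_coeff htf m k n α h y (n - jj) (by omega), zero_mul]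
  rw [heval] at key
  have hrw : (PS : B K) ^ m * PT ^ k *
      (Polynomial.C (Polynomial.C (α 0)) * (PT ^ n * (PT - PS) ^ n))
      = Polynomial.C (Polynomial.C (α 0)) * ((PS : B K) ^ m * PT ^ (k + n) * (PT - PS) ^ n) := by
    ring
  rw [hrw] at key
  have halg : (Polynomial.C (Polynomial.C (α 0)) : B K) = algebraMap K (B K) (α 0) := by
    simp [Polynomial.algebraMap_apply]
  rw [halg, ← Algebra.smul_def, psi_smul] at key
  exact htfE _ _ hα₀ key

lemma psi_E2 [IsDomain K] [Infinite K]
    (htf : ∀ (c : K) (r : R), c ≠ 0 → c • r = 0 → r = 0)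
    (m k n : ℕ) (α : Fin (n+1) → K) (hαₙ : α (Fin.last n) ≠ 0)
    (h : ∀ x y : R,
      sandwich y m (∑ i : Fin (n + 1), α i • sandwich y (i : ℕ) x (n - (i : ℕ))) k = 0)
    (y : R) :
    psi (R := R) y ((PS : B K) ^ (m + n) * PT ^ k * (PS - PT) ^ n) = 0 := by
  have htfE : ∀ (c : K) (f : Module.End K R), c ≠ 0 → c • f = 0 → f = 0 := by
    intro c f hc hf
    ext w
    refine htf c (f w) hc ?_
    rw [← LinearMap.smul_apply, hf, LinearMap.zero_apply]
  set qr := Polynomial.reflect n (qhat n α) with hqr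
  have heval : Polynomial.eval (-(PT : B K)) qr
      = Polynomial.C (Polynomial.C (α (Fin.last n))) * (PS ^ n * (PS - PT) ^ n) := by
    rw [hqr, reflect_qhat, Polynomial.eval_finset_sum]
    rw [Finset.sum_eq_single (Fin.last n)]
    · simp only [Fin.val_last, Nat.sub_self, pow_zero, mul_one,
        Polynomial.eval_mul, Polynomial.eval_pow, Polynomial.eval_add,
        Polynomial.eval_X, Polynomial.eval_C]
      rw [neg_add_eq_sub]
      ring
    · intro i _ hi
      have hin : n - (i : ℕ) ≠ 0 := by
        have h1 : (i : ℕ) ≤ n := Nat.lt_succ_iff.mp i.is_lt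
        have h2 : (i : ℕ) ≠ n := fun hh => hi (by
          apply Fin.ext
          simp [hh, Fin.val_last])
        omega
      simp only [Polynomial.eval_mul, Polynomial.eval_pow, Polynomial.eval_add,
        Polynomial.eval_X, Polynomial.eval_C, neg_add_cancel, zero_pow hin, zero_mul, mul_zero]
    · intro hab
      exact absurd (Finset.mem_univ _) hab
  have key : psi (R := R) y ((PS : B K) ^ m * PT ^ k * Polynomial.eval (-(PT : B K)) qr) = 0 := by
    rw [Polynomial.eval_eq_sum_range' (natDegree_reflect_qhat n α), Finset.mul_sum, map_sum]
    refine Finset.sum_eq_zero fun jj hjj => ?_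
    have hjn : jj ≤ n := Nat.lt_succ_iff.mp (Finset.mem_range.mp hjj)
    have hc : (PS : B K) ^ m * PT ^ k * (qr.coeff jj * (-(PT : B K)) ^ jj)
        = ((PS : B K) ^ m * PT ^ k * (qhat n α).coeff (n - jj)) * (-(PT : B K)) ^ jj := by
      rw [hqr, Polynomial.coeff_reflect, Polynomial.revAt_le hjn]
      ring
    rw [hc, map_mul, strip_coeff htf m k n α h y (n - jj) (by omega), zero_mul]
  rw [heval] at key
  have hrw : (PS : B K) ^ m * PT ^ k *
      (Polynomial.C (Polynomial.C (α (Fin.last n))) * (PS ^ n * (PS - PT) ^ n))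
      = Polynomial.C (Polynomial.C (α (Fin.last n))) *
        ((PS : B K) ^ (m + n) * PT ^ k * (PS - PT) ^ n) := by
    ring
  rw [hrw] at key
  have halg : (Polynomial.C (Polynomial.C (α (Fin.last n))) : B K)
      = algebraMap K (B K) (α (Fin.last n)) := by
    simp [Polynomial.algebraMap_apply]
  rw [halg, ← Algebra.smul_def, psi_smul] at key
  exact htfE _ _ hαₙ key

lemma split_pow {A : Type*} [CommRing A] (a b : A) :
    ∀ (N s t : ℕ), s + t = N + 1 → ∃ p q : A, (a - b) ^ N = p * a ^ s + q * b ^ t := by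
  intro N
  induction N with
  | zero =>
      intro s t hst
      rcases Nat.eq_zero_or_pos s with hs | hs
      · exact ⟨1, 0, by simp [hs]⟩
      · have ht : t = 0 := by omega
        exact ⟨0, 1, by simp [ht]⟩
  | succ N ih =>
      intro s t hst
      rcases Nat.eq_zero_or_pos s with hs | hs
      · exact ⟨(a - b) ^ (N + 1), 0, by simp [hs]⟩
      rcases Nat.eq_zero_or_pos t with ht | ht
      · exact ⟨0, (a - b) ^ (N + 1), by simp [ht]⟩
      obtain ⟨s', rfl⟩ : ∃ s', s = s' + 1 := ⟨s - 1, by omega⟩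
      obtain ⟨t', rfl⟩ : ∃ t', t = t' + 1 := ⟨t - 1, by omega⟩
      obtain ⟨p₁, q₁, h₁⟩ := ih s' (t' + 1) (by omega)
      obtain ⟨p₂, q₂, h₂⟩ := ih (s' + 1) t' (by omega)
      refine ⟨p₁ - p₂ * b, q₁ * a - q₂, ?_⟩
      calc (a - b) ^ (N + 1) = a * ((a - b) ^ N) - b * ((a - b) ^ N) := by ring
        _ = a * (p₁ * a ^ s' + q₁ * b ^ (t' + 1)) -
            b * (p₂ * a ^ (s' + 1) + q₂ * b ^ t') := by rw [← h₁, ← h₂]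
        _ = (p₁ - p₂ * b) * a ^ (s' + 1) + (q₁ * a - q₂) * b ^ (t' + 1) := by ring

lemma engel_eq_psi (x y : R) : ∀ d : ℕ, engel x y d = psi y (((PT : B K) - PS) ^ d) x := by
  intro d
  induction d with
  | zero => simp [engel]
  | succ d ih =>
      show engel x y d * y - y * engel x y d = _
      rw [pow_succ', map_mul, Module.End.mul_apply, ← ih, map_sub, psi_PS, psi_PT]
      rw [LinearMap.sub_apply, LinearMap.mulRight_apply, LinearMap.mulLeft_apply]

theorem main_lemma [IsDomain K] [Infinite K]
    (htf : ∀ (c : K) (r : R), c ≠ 0 → c • r = 0 → r = 0)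
    (m k n : ℕ) (hn : 1 ≤ n) (α : Fin (n + 1) → K)
    (hα₀ : α 0 ≠ 0) (hαₙ : α (Fin.last n) ≠ 0)
    (h : ∀ x y : R,
      sandwich y m (∑ i : Fin (n + 1), α i • sandwich y (i : ℕ) x (n - (i : ℕ))) k = 0) :
    ∀ x y : R, sandwich y m (engel x y (3 * n - 1)) k = 0 := by
  intro x y
  rw [engel_eq_psi (K := K), sandwich_eq_psi (K := K), ← Module.End.mul_apply, ← map_mul]
  obtain ⟨p, q, hpq⟩ := split_pow (PT : B K) PS (2*n - 1) n n (by omega)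
  have hsplit : (PS : B K) ^ m * PT ^ k * (PT - PS) ^ (3*n - 1)
      = p * ((PS : B K) ^ m * PT ^ (k + n) * (PT - PS) ^ n) +
        (q * (-1 : B K) ^ n) * ((PS : B K) ^ (m + n) * PT ^ k * (PS - PT) ^ n) := by
    have h3 : 3*n - 1 = (2*n - 1) + n := by omega
    have hneg : ((PT : B K) - PS) ^ n = (-1 : B K) ^ n * (PS - PT) ^ n := by
      have hh : (PT : B K) - PS = (-1) * (PS - PT) := by ring
      rw [hh, mul_pow]
    calc (PS : B K) ^ m * PT ^ k * (PT - PS) ^ (3*n - 1)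
        = (PS : B K) ^ m * PT ^ k * ((PT - PS) ^ (2*n-1) * (PT - PS) ^ n) := by
          rw [← pow_add, ← h3]
      _ = (PS : B K) ^ m * PT ^ k * ((p * PT ^ n + q * PS ^ n) * (PT - PS) ^ n) := by rw [hpq]
      _ = p * ((PS : B K) ^ m * PT ^ (k + n) * (PT - PS) ^ n) +
          q * ((PS : B K) ^ (m + n) * PT ^ k * ((PT - PS) ^ n)) := by ring
      _ = _ := by rw [hneg]; ring
  rw [hsplit, map_add, map_mul (psi y) p _, map_mul (psi y) (q * (-1 : B K) ^ n) _,
    psi_E1 htf m k n α hα₀ h y, psi_E2 htf m k n α hαₙ h y,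
    mul_zero, mul_zero, add_zero, LinearMap.zero_apply]

end EngelAux

/-- Lemma (iii): let `R` be an algebra over an infinite commutative domain `K` with
torsion-free action.  If `R` satisfies the identity `y^m α(x,y) y^k = 0`, where
`α(x,y) = ∑_{i=0}^n αᵢ yⁱ x y^{n-i}` is reduced (`α₀ ≠ 0` and `αₙ ≠ 0`), then `R`
satisfies the identity `y^m e_{3n-1}(x,y) y^k = 0`. -/
theorem engel_of_reduced_partial_linear (K R : Type*) [CommRing K] [IsDomain K]
    [Infinite K] [NonUnitalRing R] [Module K R] [IsScalarTower K R R] [SMulCommClass K R R]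
    (htf : ∀ (k : K) (r : R), k ≠ 0 → k • r = 0 → r = 0)
    (m k n : ℕ) (hn : 1 ≤ n) (α : Fin (n + 1) → K)
    (hα₀ : α 0 ≠ 0) (hαₙ : α (Fin.last n) ≠ 0)
    (h : ∀ x y : R,
      sandwich y m (∑ i : Fin (n + 1), α i • sandwich y (i : ℕ) x (n - (i : ℕ))) k = 0) :
    ∀ x y : R, sandwich y m (engel x y (3 * n - 1)) k = 0 :=
  EngelAux.main_lemma htf m k n hn α hα₀ hαₙ h
end

section
/- Let K be an infinite commutative domain and R a unital associative K-algebra with torsion-free K-action. If R satisfies an identity of the form y^m e_n(x,y) y^k = 0 for all x, y ∈ R (for some fixed m, n, k), then R satisfies the Engel identity e_n(x,y) = 0 for all x, y ∈ R. -/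
open Polynomial

lemma engel_add_central {R : Type*} [Ring R] (x y c : R) (hc : ∀ r : R, c * r = r * c) :
    ∀ n, engel x (y + c) n = engel x y n
  | 0 => rfl
  | n + 1 => by
    show engel x (y+c) n * (y+c) - (y+c) * engel x (y+c) n = _
    rw [engel_add_central x y c hc n]
    show _ = engel x y n * y - y * engel x y n
    rw [mul_add, add_mul, hc (engel x y n)]
    abel

lemma smul_coeffs_zero {K R : Type*} [CommRing K] [IsDomain K] [Infinite K]
    [AddCommGroup R] [Module K R]
    (htf : ∀ (k : K) (r : R), k ≠ 0 → k • r = 0 → r = 0)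
    (N : ℕ) (d : ℕ → R)
    (h : ∀ t : K, ∑ j ∈ Finset.range N, t ^ j • d j = 0) :
    ∀ j < N, d j = 0 := by
  intro j0 hj0
  obtain ⟨t, ht⟩ : ∃ t : Fin N → K, Function.Injective t :=
    ⟨fun i => Infinite.natEmbedding K i, fun a b hab =>
      Fin.val_injective ((Infinite.natEmbedding K).injective hab)⟩
  set A := Matrix.vandermonde t with hA
  have hdet : A.det ≠ 0 := Matrix.det_vandermonde_ne_zero_iff.mpr ht
  have hrow : ∀ i : Fin N, ∑ j : Fin N, A i j • d j = 0 := by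
    intro i
    have := h (t i)
    rw [← Fin.sum_univ_eq_sum_range (fun j => (t i) ^ j • d j) N] at this
    simpa [hA, Matrix.vandermonde] using this
  have key : A.det • d j0 = 0 := by
    have h1 : ∑ j : Fin N, ((A.adjugate * A) ⟨j0, hj0⟩ j) • d j = A.det • d j0 := by
      rw [Matrix.adjugate_mul]
      simp [Matrix.smul_apply, Matrix.one_apply, ite_smul, Finset.sum_ite_eq']
    have h2 : ∑ j : Fin N, ((A.adjugate * A) ⟨j0, hj0⟩ j) • d j = 0 := by
      simp only [Matrix.mul_apply, Finset.sum_smul]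
      rw [Finset.sum_comm]
      refine Finset.sum_eq_zero fun i _ => ?_
      simp only [mul_smul]
      rw [← Finset.smul_sum, hrow i, smul_zero]
    rw [← h1, h2]
  exact htf _ _ hdet key

/-- Subsection 2.1: if a unital algebra `R` over an infinite commutative domain `K` with
torsion-free action satisfies an identity of the form `y^m e_n(x,y) y^k = 0`, then `R`
satisfies the Engel identity `e_n(x,y) = 0`. -/
theorem engel_of_sandwiched_engel_unital (K R : Type*) [CommRing K] [IsDomain K]
    [Infinite K] [Ring R] [Algebra K R]
    (htf : ∀ (k : K) (r : R), k ≠ 0 → k • r = 0 → r = 0)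
    (m n k : ℕ) (h : ∀ x y : R, y ^ m * engel x y n * y ^ k = 0) :
    ∀ x y : R, engel x y n = 0 := by
  intro x y
  rcases subsingleton_or_nontrivial R with hS | hS
  · exact Subsingleton.elim _ _
  set e := engel x y n with he
  set p : R[X] := (X + C y) ^ m * C e * (X + C y) ^ k with hp
  have hdegA : ((X + C y : R[X]) ^ m).natDegree = m := by
    rw [(monic_X_add_C y).natDegree_pow, natDegree_X_add_C, mul_one]
  have hdegB : ((X + C y : R[X]) ^ k).natDegree = k := by
    rw [(monic_X_add_C y).natDegree_pow, natDegree_X_add_C, mul_one]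
  have hdeg : p.natDegree < m + k + 1 := by
    rw [hp]
    have h1 := natDegree_mul_le (p := (X + C y : R[X]) ^ m * C e) (q := (X + C y) ^ k)
    have h2 := natDegree_mul_le (p := (X + C y : R[X]) ^ m) (q := C e)
    rw [natDegree_C, hdegA, Nat.add_zero] at h2
    rw [hdegB] at h1
    omega
  have heval : ∀ t : K, p.eval₂ (RingHom.id R) (algebraMap K R t) = 0 := by
    intro t
    set φ : R[X] →+* R :=
      eval₂RingHom' (RingHom.id R) (algebraMap K R t)
        (fun a => Commute.symm (by exact (Algebra.commutes t a : _))) with hφ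
    show φ p = 0
    have hX : φ (X + C y) = y + algebraMap K R t := by
      simp [hφ, eval₂RingHom', add_comm]
    rw [hp, map_mul, map_mul, map_pow, map_pow, hX]
    have hC : φ (C e) = e := by simp [hφ, eval₂RingHom']
    rw [hC, he,
      ← engel_add_central x y (algebraMap K R t) (fun r => Algebra.commutes t r) n]
    exact h x (y + algebraMap K R t)
  have hsum : ∀ t : K, ∑ j ∈ Finset.range (m + k + 1), t ^ j • p.coeff j = 0 := by
    intro t
    have h1 : p.eval (algebraMap K R t) = 0 := heval t
    rw [eval_eq_sum_range' hdeg] at h1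
    rw [← h1]
    refine Finset.sum_congr rfl fun j _ => ?_
    rw [← map_pow, Algebra.smul_def, ← Algebra.commutes]
  have hc0 : ∀ j < m + k + 1, p.coeff j = 0 :=
    smul_coeffs_zero htf (m + k + 1) (fun j => p.coeff j) hsum
  have hp0 : p = 0 := by
    ext j
    rcases lt_or_ge j (m + k + 1) with hj | hj
    · simpa using hc0 j hj
    · simp [coeff_eq_zero_of_natDegree_lt (lt_of_lt_of_le hdeg hj)]
  have h3 : C e * (X + C y : R[X]) ^ k = 0 := by
    have h5 := hp0
    rw [hp, mul_assoc] at h5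
    exact ((monic_X_add_C y).pow m).isRegular.left
      (h5.trans (mul_zero ((X + C y : R[X]) ^ m)).symm)
  have h4 : (C e : R[X]) = 0 :=
    ((monic_X_add_C y).pow k).isRegular.right
      (h3.trans (zero_mul ((X + C y : R[X]) ^ k)).symm)
  exact C_eq_zero.mp h4
end

section
/- Let K be an infinite commutative domain and let α = Σ_{i=0}^n α_i yⁱ x y^{n−i} be an element of the K-span W_n of the monomials yⁱ x y^{n−i} (i = 0,…,n) in the free unital associative algebra K⟨x,y⟩. Then Δα = 0, where Δα(x,y) = α(x, y+1) − α(x,y), if and only if α is a scalar multiple of e_n = Σ_{i=0}^n (−1)^i C(n,i) yⁱ x y^{n−i}. -/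
/-- The generator `x` of the free unital associative algebra `K⟨x,y⟩`. -/
noncomputable def Xg (K : Type*) [CommRing K] : FreeAlgebra K (Fin 2) :=
  FreeAlgebra.ι K 0

/-- The generator `y` of the free unital associative algebra `K⟨x,y⟩`. -/
noncomputable def Yg (K : Type*) [CommRing K] : FreeAlgebra K (Fin 2) :=
  FreeAlgebra.ι K 1

/-- The monomial `yⁱ x y^{n-i}`, a basis element of `W_n ⊆ K⟨x,y⟩`. -/
noncomputable def Wmono (K : Type*) [CommRing K] (n i : ℕ) : FreeAlgebra K (Fin 2) :=
  Yg K ^ i * Xg K * Yg K ^ (n - i)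

/-- `e_n = ∑_{i=0}^n (-1)^i C(n,i) yⁱ x y^{n-i} ∈ K⟨x,y⟩`, the Engel polynomial. -/
noncomputable def engelPoly (K : Type*) [CommRing K] (n : ℕ) : FreeAlgebra K (Fin 2) :=
  ∑ i ∈ Finset.range (n + 1), ((-1 : K) ^ i * (n.choose i : K)) • Wmono K n i

/-- The substitution `x ↦ x`, `y ↦ y + 1` on `K⟨x,y⟩`, so that
`Δα(x,y) = deltaSub K α - α = α(x, y+1) - α(x,y)`. -/
noncomputable def deltaSub (K : Type*) [CommRing K] :
    FreeAlgebra K (Fin 2) →ₐ[K] FreeAlgebra K (Fin 2) :=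
  FreeAlgebra.lift K ![Xg K, Yg K + 1]

noncomputable section EngelAux
open Polynomial

variable (K : Type*) [CommRing K]

lemma deltaSub_Xg : deltaSub K (Xg K) = Xg K := by
  simp [deltaSub, Xg]

lemma deltaSub_Yg : deltaSub K (Yg K) = Yg K + 1 := by
  simp [deltaSub, Yg]

lemma Wmono_mul_Yg {n i : ℕ} (h : i ≤ n) :
    Wmono K n i * Yg K = Wmono K (n + 1) i := by
  unfold Wmono
  rw [mul_assoc, mul_assoc, ← pow_succ, show n - i + 1 = n + 1 - i by omega, ← mul_assoc]

lemma Yg_mul_Wmono (n i : ℕ) :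
    Yg K * Wmono K n i = Wmono K (n + 1) (i + 1) := by
  unfold Wmono
  rw [Nat.succ_sub_succ, ← mul_assoc, ← mul_assoc, ← pow_succ']

lemma engel_succ (n : ℕ) :
    engelPoly K (n + 1) = engelPoly K n * Yg K - Yg K * engelPoly K n := by
  set a : ℕ → K := fun i => (-1 : K) ^ i * (n.choose i : K) with ha
  have hb : ∀ i : ℕ, (-1 : K) ^ (i + 1) * ((n + 1).choose (i + 1) : K) = a (i + 1) - a i := by
    intro i
    rw [Nat.choose_succ_succ]
    push_cast
    simp only [ha]
    ring
  have htop : a (n + 1) = 0 := by simp [ha, Nat.choose_succ_self]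
  have hRHS : engelPoly K n * Yg K - Yg K * engelPoly K n
      = ∑ i ∈ Finset.range (n + 1),
          (a i • Wmono K (n + 1) i - a i • Wmono K (n + 1) (i + 1)) := by
    unfold engelPoly
    rw [Finset.sum_mul, Finset.mul_sum, ← Finset.sum_sub_distrib]
    refine Finset.sum_congr rfl fun i hi => ?_
    rw [smul_mul_assoc, mul_smul_comm,
      Wmono_mul_Yg K (Nat.lt_succ_iff.mp (Finset.mem_range.mp hi)), Yg_mul_Wmono]
  rw [hRHS]
  calc engelPoly K (n + 1)
      = (∑ i ∈ Finset.range (n + 1),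
          ((-1 : K) ^ (i + 1) * ((n + 1).choose (i + 1) : K)) • Wmono K (n + 1) (i + 1))
        + ((-1 : K) ^ 0 * ((n + 1).choose 0 : K)) • Wmono K (n + 1) 0 :=
        Finset.sum_range_succ' _ _
    _ = (∑ i ∈ Finset.range (n + 1),
          (a (i + 1) • Wmono K (n + 1) (i + 1) - a i • Wmono K (n + 1) (i + 1)))
        + a 0 • Wmono K (n + 1) 0 := by
        congr 1
        · exact Finset.sum_congr rfl fun i _ => by rw [hb, sub_smul]
        · simp [ha]
    _ = ((∑ i ∈ Finset.range (n + 1), a (i + 1) • Wmono K (n + 1) (i + 1))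
          + a 0 • Wmono K (n + 1) 0)
        - ∑ i ∈ Finset.range (n + 1), a i • Wmono K (n + 1) (i + 1) := by
        rw [Finset.sum_sub_distrib]; abel
    _ = (∑ i ∈ Finset.range (n + 2), a i • Wmono K (n + 1) i)
        - ∑ i ∈ Finset.range (n + 1), a i • Wmono K (n + 1) (i + 1) := by
        rw [Finset.sum_range_succ' (fun i => a i • Wmono K (n + 1) i) (n + 1)]
    _ = (∑ i ∈ Finset.range (n + 1), a i • Wmono K (n + 1) i)
        - ∑ i ∈ Finset.range (n + 1), a i • Wmono K (n + 1) (i + 1) := by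
        rw [Finset.sum_range_succ, htop, zero_smul, add_zero]
    _ = ∑ i ∈ Finset.range (n + 1),
          (a i • Wmono K (n + 1) i - a i • Wmono K (n + 1) (i + 1)) :=
        (Finset.sum_sub_distrib _ _).symm

lemma deltaSub_engel (n : ℕ) : deltaSub K (engelPoly K n) = engelPoly K n := by
  induction n with
  | zero =>
    have h0 : engelPoly K 0 = Xg K := by simp [engelPoly, Wmono]
    rw [h0, deltaSub_Xg]
  | succ n ih =>
    rw [engel_succ K n, map_sub, map_mul, map_mul, deltaSub_Yg, ih, mul_add, add_mul,
      mul_one, one_mul]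
    abel

lemma diag_pow {R : Type*} [CommRing R] (a b : R) (m : ℕ) :
    (!![a, 0; 0, b] : Matrix (Fin 2) (Fin 2) R) ^ m = !![a ^ m, 0; 0, b ^ m] := by
  induction m with
  | zero => simp [Matrix.one_fin_two]
  | succ m ih => rw [pow_succ, ih, Matrix.mul_fin_two]; simp [pow_succ]

lemma sandwich_s16 {R : Type*} [CommRing R] (a b : R) (i j : ℕ) :
    (!![a, 0; 0, b] : Matrix (Fin 2) (Fin 2) R) ^ i * !![0, 1; 0, 0] * !![a, 0; 0, b] ^ j
      = !![0, a ^ i * b ^ j; 0, 0] := by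
  rw [diag_pow, diag_pow, Matrix.mul_fin_two, Matrix.mul_fin_two]
  simp

/-- x ↦ E₀₁, y ↦ diag(s, t) into 2×2 matrices over `K[s][t]`. -/
def psi : FreeAlgebra K (Fin 2) →ₐ[K] Matrix (Fin 2) (Fin 2) (Polynomial (Polynomial K)) :=
  FreeAlgebra.lift K ![!![0, 1; 0, 0], !![C X, 0; 0, X]]

lemma psi_Xg : psi K (Xg K) = !![0, 1; 0, 0] := by simp [psi, Xg]

lemma psi_Yg : psi K (Yg K) = !![C X, 0; 0, X] := by simp [psi, Yg]

lemma psi_Wmono (n i : ℕ) :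
    psi K (Wmono K n i)
      = !![0, (C X : Polynomial (Polynomial K)) ^ i * X ^ (n - i); 0, 0] := by
  rw [Wmono, map_mul, map_mul, map_pow, map_pow, psi_Xg, psi_Yg, sandwich_s16]

lemma psi_delta_Wmono (n i : ℕ) :
    psi K (deltaSub K (Wmono K n i))
      = !![0, ((C X : Polynomial (Polynomial K)) + 1) ^ i * (X + 1) ^ (n - i); 0, 0] := by
  have hadd : (!![C X, 0; 0, X] : Matrix (Fin 2) (Fin 2) (Polynomial (Polynomial K))) + 1
      = !![C X + 1, 0; 0, X + 1] := by
    rw [Matrix.one_fin_two]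
    ext i j
    fin_cases i <;> fin_cases j <;> simp
  rw [Wmono]
  simp only [map_mul, map_pow, map_add, map_one, deltaSub_Xg, deltaSub_Yg, psi_Xg, psi_Yg]
  rw [hadd, sandwich_s16]

end EngelAux

/-- Proposition 2.3(i): for `α = ∑_{i=0}^n αᵢ yⁱ x y^{n-i} ∈ W_n ⊆ K⟨x,y⟩` over an
infinite commutative domain `K`, one has `Δα = α(x, y+1) - α(x,y) = 0` if and only if
`α` is a scalar multiple of `e_n`. -/
theorem delta_eq_zero_iff_smul_engel (K : Type*) [CommRing K] [IsDomain K] [Infinite K]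
    (n : ℕ) (c : Fin (n + 1) → K) :
    deltaSub K (∑ i : Fin (n + 1), c i • Wmono K n (i : ℕ)) -
        (∑ i : Fin (n + 1), c i • Wmono K n (i : ℕ)) = 0 ↔
      ∃ k : K, (∑ i : Fin (n + 1), c i • Wmono K n (i : ℕ)) = k • engelPoly K n := by
  open Polynomial in
  constructor
  · intro h
    have hmat := congrArg (psi K) (sub_eq_zero.mp h)
    simp only [map_sum, map_smul] at hmat
    simp only [psi_delta_Wmono, psi_Wmono] at hmat
    have hpoly := congrArg
      (fun M : Matrix (Fin 2) (Fin 2) (Polynomial (Polynomial K)) => M 0 1) hmat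
    simp only [Matrix.sum_apply, Matrix.smul_apply, Matrix.of_apply, Matrix.cons_val',
      Matrix.cons_val_one, Matrix.head_cons, Matrix.cons_val_zero, Matrix.empty_val',
      Matrix.cons_val_fin_one] at hpoly
    -- evaluate outer variable at 0
    have h1 := congrArg (Polynomial.eval (0 : Polynomial K)) hpoly
    simp only [Polynomial.eval_finset_sum, Polynomial.eval_smul, Polynomial.eval_mul,
      Polynomial.eval_pow, Polynomial.eval_add, Polynomial.eval_C, Polynomial.eval_X,
      Polynomial.eval_one, zero_add, one_pow, mul_one] at h1
    have hr : (∑ i : Fin (n + 1), c i • ((X : Polynomial K) ^ (i : ℕ) * 0 ^ (n - (i : ℕ))))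
        = c (Fin.last n) • (X : Polynomial K) ^ n := by
      rw [Fintype.sum_eq_single (Fin.last n)]
      · simp
      · intro b hb
        have hlt : (b : ℕ) < n := Fin.val_lt_last hb
        rw [zero_pow (by omega : n - (b : ℕ) ≠ 0), mul_zero, smul_zero]
    rw [hr] at h1
    -- substitute X ↦ X - 1
    have h2 := congrArg (Polynomial.aeval (X - 1 : Polynomial K)) h1
    simp only [map_sum, map_smul, map_pow, map_add, map_one, Polynomial.aeval_X,
      sub_add_cancel] at h2
    -- compare coefficients
    have hcoef : ∀ j : Fin (n + 1),
        c j = c (Fin.last n) * ((-1 : K) ^ (n - (j : ℕ)) * (n.choose (j : ℕ) : K)) := by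
      intro j
      have h3 := congrArg (fun p : Polynomial K => p.coeff (j : ℕ)) h2
      simp only [Polynomial.finset_sum_coeff, Polynomial.coeff_smul,
        Polynomial.coeff_X_pow, smul_eq_mul] at h3
      rw [Fintype.sum_eq_single j (fun b hb => by
        rw [if_neg (fun hh => hb (Fin.ext hh.symm)), mul_zero]), if_pos rfl, mul_one] at h3
      rw [h3, show (X - 1 : Polynomial K) = X + Polynomial.C (-1) by simp [sub_eq_add_neg],
        Polynomial.coeff_X_add_C_pow]
    have hsign : ∀ j : ℕ, j ≤ n → ((-1 : K) ^ (n - j)) = (-1 : K) ^ n * (-1 : K) ^ j := by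
      intro j hj
      calc ((-1 : K) ^ (n - j)) = (-1 : K) ^ (n - j) * ((-1 : K) ^ 2) ^ j := by norm_num
        _ = (-1 : K) ^ (n - j + 2 * j) := by rw [← pow_mul, ← pow_add]
        _ = (-1 : K) ^ (n + j) := by congr 1; omega
        _ = (-1 : K) ^ n * (-1 : K) ^ j := by rw [pow_add]
    refine ⟨(-1 : K) ^ n * c (Fin.last n), ?_⟩
    have hengel : engelPoly K n
        = ∑ i : Fin (n + 1), ((-1 : K) ^ (i : ℕ) * (n.choose (i : ℕ) : K)) • Wmono K n (i : ℕ) := by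
      rw [engelPoly, Finset.sum_range]
    rw [hengel, Finset.smul_sum]
    refine Finset.sum_congr rfl fun i _ => ?_
    rw [smul_smul]
    congr 1
    rw [hcoef i, hsign (i : ℕ) (by omega)]
    ring
  · rintro ⟨k, hk⟩
    rw [hk, map_smul, deltaSub_engel, sub_self]
end

section
/- Let K be an infinite commutative domain of characteristic 0 and let α = Σ_{i=0}^n α_i yⁱ x y^{n−i} be an element of the K-span W_n of the monomials yⁱ x y^{n−i} in the free unital associative algebra K⟨x,y⟩. Then ∂α/∂y = 0, where ∂/∂y is the Hausdorff derivative (the unique K-derivation of K⟨x,y⟩ sending y to 1 and x to 0), if and only if α is a scalar multiple of e_n = Σ_{i=0}^n (−1)^i C(n,i) yⁱ x y^{n−i}. -/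
/-- The word `1^j 0 1^(m-j)` in the free monoid. -/
def WWord (m j : ℕ) : FreeMonoid (Fin 2) :=
  FreeMonoid.of 1 ^ j * FreeMonoid.of 0 * FreeMonoid.of 1 ^ (m - j)

lemma toList_pow_of (a : Fin 2) (k : ℕ) :
    FreeMonoid.toList (FreeMonoid.of a ^ k) = List.replicate k a := by
  induction k with
  | zero => rfl
  | succ k ih =>
      rw [pow_succ, FreeMonoid.toList_mul, ih, FreeMonoid.toList_of,
        List.replicate_succ' ]

lemma replicate_cons_inj : ∀ j k : ℕ, ∀ s t : List (Fin 2),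
    List.replicate j 1 ++ 0 :: s = List.replicate k 1 ++ 0 :: t → j = k := by
  intro j
  induction j with
  | zero =>
      intro k s t h
      cases k with
      | zero => rfl
      | succ k => simp [List.replicate_succ] at h
  | succ j ih =>
      intro k s t h
      cases k with
      | zero => simp [List.replicate_succ] at h
      | succ k =>
          simp only [List.replicate_succ, List.cons_append, List.cons.injEq] at h
          exact congrArg Nat.succ (ih k _ _ h.2)

lemma WWord_inj (m : ℕ) {j k : ℕ} (h : WWord m j = WWord m k) : j = k := by
  have h' := congrArg FreeMonoid.toList h
  simp only [WWord, FreeMonoid.toList_mul, toList_pow_of, FreeMonoid.toList_of] at h'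
  exact replicate_cons_inj j k _ _ (by simpa using h')

lemma phi_Wmono (K : Type*) [CommRing K] (m j : ℕ) :
    FreeAlgebra.equivMonoidAlgebraFreeMonoid (Wmono K m j)
      = MonoidAlgebra.single (WWord m j) (1 : K) := by
  have hι : ∀ a : Fin 2, FreeAlgebra.equivMonoidAlgebraFreeMonoid (FreeAlgebra.ι K a)
      = MonoidAlgebra.single (FreeMonoid.of a) (1 : K) := by
    intro a
    simp [FreeAlgebra.equivMonoidAlgebraFreeMonoid, MonoidAlgebra.of_apply]
  simp only [Wmono, Xg, Yg, map_mul, map_pow, hι, MonoidAlgebra.single_pow, one_pow,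
    MonoidAlgebra.single_mul_single, one_mul, WWord]

lemma single_indep (K : Type*) [CommRing K] (m : ℕ) :
    LinearIndependent K fun j : Fin (m + 1) =>
      (MonoidAlgebra.single (WWord m (j : ℕ)) (1 : K) :
        MonoidAlgebra K (FreeMonoid (Fin 2))) := by
  have h1 := (MonoidAlgebra.basis (FreeMonoid (Fin 2)) K).linearIndependent
  have h2 := h1.comp (fun j : Fin (m + 1) => WWord m (j : ℕ))
    (fun a b hab => Fin.ext (WWord_inj m hab))
  exact h2

lemma wmono_indep (K : Type*) [CommRing K] (m : ℕ) (a : Fin (m + 1) → K)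
    (h : ∑ j : Fin (m + 1), a j • Wmono K m (j : ℕ) = 0) : ∀ j, a j = 0 := by
  have h2 := congrArg FreeAlgebra.equivMonoidAlgebraFreeMonoid h
  simp only [map_sum, map_smul, map_zero, phi_Wmono] at h2
  exact Fintype.linearIndependent_iff.mp (single_indep K m) a h2

section Deriv
variable {K : Type*} [CommRing K]
variable (D : FreeAlgebra K (Fin 2) →ₗ[K] FreeAlgebra K (Fin 2))
  (hLeibniz : ∀ a b : FreeAlgebra K (Fin 2), D (a * b) = D a * b + a * D b)
  (hDx : D (Xg K) = 0) (hDy : D (Yg K) = 1)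

include hLeibniz in
lemma D_one : D 1 = 0 := by
  have h := hLeibniz 1 1
  simp only [mul_one, one_mul] at h
  exact (left_eq_add.mp h)

include hLeibniz hDy in
lemma D_pow (k : ℕ) : D (Yg K ^ k) = (k : K) • Yg K ^ (k - 1) := by
  induction k with
  | zero => simp [D_one D hLeibniz]
  | succ k ih =>
      rw [pow_succ, hLeibniz, ih, hDy, mul_one]
      have hk : ((k : K) • Yg K ^ (k - 1)) * Yg K = (k : K) • Yg K ^ k := by
        cases k with
        | zero => simp
        | succ k => rw [smul_mul_assoc, Nat.succ_sub_one, ← pow_succ]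
      rw [hk]
      push_cast
      rw [add_smul, one_smul]

include hLeibniz hDx hDy in
lemma D_Wmono (m i : ℕ) :
    D (Wmono K (m + 1) i) =
      (i : K) • Wmono K m (i - 1) + ((m + 1 - i : ℕ) : K) • Wmono K m i := by
  have h1 : D (Wmono K (m + 1) i) = D (Yg K ^ i) * (Xg K * Yg K ^ (m + 1 - i))
      + Yg K ^ i * (D (Xg K) * Yg K ^ (m + 1 - i) + Xg K * D (Yg K ^ (m + 1 - i))) := by
    rw [Wmono, mul_assoc, hLeibniz, hLeibniz]
  rw [h1, hDx, D_pow D hLeibniz hDy, D_pow D hLeibniz hDy, zero_mul, zero_add]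
  have h2 : m + 1 - i - 1 = m - i := by omega
  rw [h2, smul_mul_assoc, mul_smul_comm]
  congr 1
  · cases i with
    | zero => simp
    | succ i =>
        rw [Nat.succ_sub_one]
        have : m - i = m + 1 - (i + 1) := by omega
        rw [Wmono, this, mul_assoc]
  · rw [mul_smul_comm, Wmono, mul_assoc]

include hLeibniz hDx hDy in
lemma D_sum (m : ℕ) (b : Fin (m + 2) → K) :
    D (∑ i : Fin (m + 2), b i • Wmono K (m + 1) (i : ℕ)) =
      ∑ j : Fin (m + 1),
        (b j.succ * (((j : ℕ) + 1 : ℕ) : K) + b j.castSucc * ((m + 1 - (j : ℕ) : ℕ) : K))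
          • Wmono K m (j : ℕ) := by
  rw [map_sum]
  have key : ∀ i : Fin (m + 2), D (b i • Wmono K (m + 1) (i : ℕ))
      = (b i * ((i : ℕ) : K)) • Wmono K m ((i : ℕ) - 1)
        + (b i * ((m + 1 - (i : ℕ) : ℕ) : K)) • Wmono K m (i : ℕ) := by
    intro i
    rw [map_smul, D_Wmono D hLeibniz hDx hDy, smul_add, smul_smul, smul_smul]
  rw [Finset.sum_congr rfl (fun i _ => key i), Finset.sum_add_distrib]
  rw [Fin.sum_univ_succ
    (fun i : Fin (m + 2) => (b i * ((i : ℕ) : K)) • Wmono K m ((i : ℕ) - 1))]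
  rw [Fin.sum_univ_castSucc
    (fun i : Fin (m + 2) => (b i * ((m + 1 - (i : ℕ) : ℕ) : K)) • Wmono K m (i : ℕ))]
  simp only [Fin.val_zero, Nat.cast_zero, mul_zero, zero_smul, zero_add, Fin.val_succ,
    Fin.val_last, Nat.sub_self, add_zero, Nat.add_sub_cancel, Fin.coe_castSucc]
  rw [← Finset.sum_add_distrib]
  exact Finset.sum_congr rfl (fun j _ => by rw [add_smul])

end Deriv

/-- Proposition 2.3(ii): let `K` be an infinite commutative domain of characteristic `0`
and let `D` be the Hausdorff derivative `∂/∂y`, i.e. the (unique) `K`-linear derivation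
of `K⟨x,y⟩` with `D x = 0` and `D y = 1`.  Then, for
`α = ∑_{i=0}^n αᵢ yⁱ x y^{n-i} ∈ W_n`, one has `∂α/∂y = 0` if and only if `α` is a
scalar multiple of `e_n`. -/
theorem hausdorff_derivative_eq_zero_iff_smul_engel (K : Type*) [CommRing K] [IsDomain K]
    [CharZero K]
    (D : FreeAlgebra K (Fin 2) →ₗ[K] FreeAlgebra K (Fin 2))
    (hLeibniz : ∀ a b : FreeAlgebra K (Fin 2), D (a * b) = D a * b + a * D b)
    (hDx : D (Xg K) = 0) (hDy : D (Yg K) = 1)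
    (n : ℕ) (c : Fin (n + 1) → K) :
    D (∑ i : Fin (n + 1), c i • Wmono K n (i : ℕ)) = 0 ↔
      ∃ k : K, (∑ i : Fin (n + 1), c i • Wmono K n (i : ℕ)) = k • engelPoly K n := by
    cases n with
  | zero =>
      constructor
      · intro _
        refine ⟨c 0, ?_⟩
        simp [engelPoly, Fin.sum_univ_one]
      · intro _
        simp [Fin.sum_univ_one, Wmono, map_smul, hDx]
  | succ m =>
      have hD : D (∑ i : Fin (m + 1 + 1), c i • Wmono K (m + 1) (i : ℕ)) =
          ∑ j : Fin (m + 1),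
            (c (Fin.succ j) * (((j : ℕ) + 1 : ℕ) : K)
              + c (Fin.castSucc j) * ((m + 1 - (j : ℕ) : ℕ) : K)) • Wmono K m (j : ℕ) :=
        D_sum D hLeibniz hDx hDy m c
      constructor
      · intro h0
        rw [hD] at h0
        have hrel := wmono_indep K m _ h0
        -- solve the recurrence
        have hc : ∀ i : ℕ, ∀ h : i < m + 1 + 1,
            c ⟨i, h⟩ = (-1 : K) ^ i * (((m + 1).choose i : ℕ) : K) * c 0 := by
          intro i
          induction i with
          | zero => intro h; simp [show (⟨0, h⟩ : Fin (m + 1 + 1)) = 0 from rfl]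
          | succ i ih =>
              intro h
              have hi : i < m + 1 := by omega
              have hj := hrel ⟨i, hi⟩
              have hs : Fin.succ (⟨i, hi⟩ : Fin (m + 1)) = ⟨i + 1, h⟩ := rfl
              have hcs : Fin.castSucc (⟨i, hi⟩ : Fin (m + 1)) = ⟨i, by omega⟩ := rfl
              rw [hs, hcs, ih (by omega)] at hj
              have hch : (((m + 1).choose (i + 1) : ℕ) : K) * ((i + 1 : ℕ) : K)
                  = (((m + 1).choose i : ℕ) : K) * ((m + 1 - i : ℕ) : K) := by
                exact_mod_cast congrArg (fun t : ℕ => (t : K))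
                  (Nat.choose_succ_right_eq (m + 1) i)
              have hne : ((i + 1 : ℕ) : K) ≠ 0 :=
                Nat.cast_ne_zero.mpr (Nat.succ_ne_zero i)
              apply mul_right_cancel₀ hne
              push_cast at hj hch ⊢
              linear_combination hj + ((-1 : K) ^ i * c 0) * hch
        refine ⟨c 0, ?_⟩
        rw [engelPoly, Finset.smul_sum,
          ← Fin.sum_univ_eq_sum_range
            (fun i => c 0 • (((-1 : K) ^ i * (((m + 1).choose i : ℕ) : K)) • Wmono K (m + 1) i))
            (m + 1 + 1)]
        refine Finset.sum_congr rfl fun i _ => ?_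
        rw [smul_smul]
        have := hc (i : ℕ) i.isLt
        rw [Fin.eta] at this
        rw [this]
        ring_nf
      · rintro ⟨k, hk⟩
        rw [hk, map_smul]
        have he : engelPoly K (m + 1) =
            ∑ i : Fin (m + 1 + 1),
              ((-1 : K) ^ (i : ℕ) * (((m + 1).choose (i : ℕ) : ℕ) : K)) • Wmono K (m + 1) (i : ℕ) := by
          rw [engelPoly, ← Fin.sum_univ_eq_sum_range
            (fun i => ((-1 : K) ^ i * (((m + 1).choose i : ℕ) : K)) • Wmono K (m + 1) i)
            (m + 1 + 1)]
        rw [he, D_sum D hLeibniz hDx hDy m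
          (fun i : Fin (m + 1 + 1) => (-1 : K) ^ (i : ℕ) * (((m + 1).choose (i : ℕ) : ℕ) : K))]
        rw [Finset.sum_eq_zero, smul_zero]
        intro j _
        simp only [Fin.val_succ, Fin.coe_castSucc]
        have hch : (((m + 1).choose ((j : ℕ) + 1) : ℕ) : K) * (((j : ℕ) + 1 : ℕ) : K)
            = (((m + 1).choose (j : ℕ) : ℕ) : K) * ((m + 1 - (j : ℕ) : ℕ) : K) := by
          exact_mod_cast congrArg (fun t : ℕ => (t : K))
            (Nat.choose_succ_right_eq (m + 1) (j : ℕ))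
        rw [← zero_smul K (Wmono K m (j : ℕ))]
        congr 1
        push_cast at hch ⊢
        linear_combination ((-1 : K) ^ ((j : ℕ) + 1)) * hch
end
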